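/- arXiv:1206.6780 — 8 statements merged into one kernel-verified Lean document; each statement's English description precedes it below -/
import Mathlib

section
/- Let G, H be countable groups and φ : G → H a group homomorphism. Then the map Sub(G) → Sub(H) sending a subgroup N to its image φ(N) is Borel measurable. Moreover, if the kernel of φ is finite, this map is continuous. -/
open TopologicalSpace Set

/-- The topology on `Sub(G)` induced from the product topology on `{0,1}^G`. -/
def subTop (G : Type*) [Group G] : TopologicalSpace (Subgroup G) :=
  TopologicalSpace.induced (fun H : Subgroup G => fun g : G => (g ∈ H : Prop))
    (@Pi.topologicalSpace G (fun _ => Prop) (fun _ => ⊥))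

lemma contPropBot {X : Type*} [tX : TopologicalSpace X] {A : Set X}
    (hA : IsOpen A) (hA' : IsOpen Aᶜ) :
    @Continuous X Prop tX ⊥ (fun x => (x ∈ A : Prop)) := by
  classical
  rw [continuous_def]
  intro s _
  have key : (fun x => (x ∈ A : Prop)) ⁻¹' s =
      ((if True ∈ s then A else ∅) ∪ (if False ∈ s then Aᶜ else ∅)) := by
    ext x
    by_cases hx : x ∈ A
    · have : (x ∈ A : Prop) = True := eq_true hx
      simp only [mem_preimage, this]
      split_ifs <;> simp_all
    · have : (x ∈ A : Prop) = False := eq_false hx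
      simp only [mem_preimage, this]
      split_ifs <;> simp_all
  rw [key]
  apply IsOpen.union <;> split_ifs <;> simp [hA, hA', isOpen_empty]

lemma isOpen_Q {G : Type*} [Group G] (g : G) :
    @IsOpen _ (subTop G) {N : Subgroup G | g ∈ N} ∧ @IsOpen _ (subTop G) {N : Subgroup G | g ∈ N}ᶜ := by
  letI : TopologicalSpace Prop := ⊥
  haveI : DiscreteTopology Prop := ⟨rfl⟩
  letI tG : TopologicalSpace (Subgroup G) := subTop G
  have hInd : Topology.IsInducing (fun N : Subgroup G => fun g : G => (g ∈ N : Prop)) := ⟨rfl⟩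
  have hc : ∀ g : G, Continuous (fun N : Subgroup G => (g ∈ N : Prop)) := fun g =>
    (continuous_apply g).comp hInd.continuous
  exact ⟨(hc g).isOpen_preimage {p | p} (isOpen_discrete _),
    (hc g).isOpen_preimage {p | p}ᶜ (isOpen_discrete _)⟩

lemma subTop_eq_generateFrom (H : Type*) [Group H] :
    subTop H = TopologicalSpace.generateFrom
      ((Set.range fun h : H => {N : Subgroup H | h ∈ N}) ∪
       (Set.range fun h : H => {N : Subgroup H | h ∈ N}ᶜ)) := by
  set S := (Set.range fun h : H => {N : Subgroup H | h ∈ N}) ∪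
       (Set.range fun h : H => {N : Subgroup H | h ∈ N}ᶜ) with hS
  letI : TopologicalSpace Prop := ⊥
  haveI : DiscreteTopology Prop := ⟨rfl⟩
  apply le_antisymm
  · rw [le_generateFrom_iff_subset_isOpen]
    rintro t (⟨h, rfl⟩ | ⟨h, rfl⟩)
    · exact (isOpen_Q h).1
    · exact (isOpen_Q h).2
  · have hc : @Continuous (Subgroup H) (H → Prop) (TopologicalSpace.generateFrom S) _
        (fun N : Subgroup H => fun h : H => (h ∈ N : Prop)) := by
      apply @continuous_pi _ _ _ (TopologicalSpace.generateFrom S) _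
      intro h
      exact @contPropBot _ (TopologicalSpace.generateFrom S) {N : Subgroup H | h ∈ N}
        (TopologicalSpace.isOpen_generateFrom_of_mem (Or.inl ⟨h, rfl⟩))
        (TopologicalSpace.isOpen_generateFrom_of_mem (Or.inr ⟨h, rfl⟩))
    exact continuous_iff_le_induced.mp hc

/-- For countable groups `G, H` and a homomorphism `φ : G →* H`, the map
`Sub(G) → Sub(H)`, `N ↦ φ(N)`, is Borel measurable; if moreover `ker φ` is finite,
it is continuous. -/
theorem stmt5 (G H : Type*) [Group G] [Group H] [Countable G] [Countable H]
    (φ : G →* H) :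
    (@Measurable _ _ (@borel _ (subTop G)) (@borel _ (subTop H))
      (fun N : Subgroup G => N.map φ)) ∧
    (Finite φ.ker →
      @Continuous _ _ (subTop G) (subTop H) (fun N : Subgroup G => N.map φ)) := by
  classical
  letI : TopologicalSpace Prop := ⊥
  haveI : DiscreteTopology Prop := ⟨rfl⟩
  letI tG : TopologicalSpace (Subgroup G) := subTop G
  letI tH : TopologicalSpace (Subgroup H) := subTop H
  letI mG : MeasurableSpace (Subgroup G) := borel (Subgroup G)
  haveI : BorelSpace (Subgroup G) := ⟨rfl⟩
  have hIndH : Topology.IsInducing (fun N : Subgroup H => fun h : H => (h ∈ N : Prop)) := ⟨rfl⟩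
  haveI : SecondCountableTopology (Subgroup H) := hIndH.secondCountableTopology
  set S := (Set.range fun h : H => {N : Subgroup H | h ∈ N}) ∪
       (Set.range fun h : H => {N : Subgroup H | h ∈ N}ᶜ) with hS
  -- the key preimage computation
  have hpre : ∀ h : H, {N : Subgroup G | h ∈ N.map φ} =
      ⋃ g ∈ φ ⁻¹' {h}, {N : Subgroup G | g ∈ N} := by
    intro h
    ext N
    simp only [Set.mem_setOf_eq, Subgroup.mem_map, Set.mem_iUnion, Set.mem_preimage,
      Set.mem_singleton_iff, exists_prop]
    tauto
  have m1 : ∀ h : H, MeasurableSet {N : Subgroup G | h ∈ N.map φ} := by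
    intro h
    rw [hpre h]
    exact MeasurableSet.biUnion (Set.to_countable _)
      (fun g _ => ((isOpen_Q g).1).measurableSet)
  constructor
  · -- measurability
    have hb : @borel (Subgroup H) (subTop H) = MeasurableSpace.generateFrom S :=
      borel_eq_generateFrom_of_subbasis (subTop_eq_generateFrom H)
    have : @Measurable _ _ mG (MeasurableSpace.generateFrom S)
        (fun N : Subgroup G => N.map φ) := by
      apply measurable_generateFrom
      rintro t (⟨h, rfl⟩ | ⟨h, rfl⟩)
      · exact m1 h
      · exact (m1 h).compl
    rw [← hb] at this
    exact this
  · -- continuity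
    intro hker
    have hfin : ∀ h : H, (φ ⁻¹' {h}).Finite := by
      intro h
      rcases Set.eq_empty_or_nonempty (φ ⁻¹' {h}) with he | ⟨g₀, hg₀⟩
      · simp [he]
      · apply (Set.finite_range fun k : φ.ker => g₀ * (k : G)).subset
        intro g hg
        refine ⟨⟨g₀⁻¹ * g, ?_⟩, by simp⟩
        have hg' : φ g = h := hg
        have hg₀' : φ g₀ = h := hg₀
        simp [MonoidHom.mem_ker, hg', hg₀']
    apply continuous_induced_rng.2
    apply continuous_pi
    intro h
    apply contPropBot (A := {N : Subgroup G | h ∈ N.map φ})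
    · rw [hpre h]
      exact isOpen_biUnion fun g _ => (isOpen_Q g).1
    · have : {N : Subgroup G | h ∈ N.map φ}ᶜ = ⋂ g ∈ φ ⁻¹' {h}, {N : Subgroup G | g ∈ N}ᶜ := by
        rw [hpre h, Set.compl_iUnion₂]
      rw [this]
      exact (hfin h).isOpen_biInter fun g _ => (isOpen_Q g).2
end

section
/- Let p be a prime, n ≥ 1, and A = ⊕_{ℤ} (ℤ/pℤ)^n (the direct sum over the integers). Then the space Sub(A) of subgroups of A has no isolated points. -/
/-- The topology on the space of subgroups of an additive group `A`, induced from the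
product topology on `{0,1}^A` via characteristic functions. -/
def addSubTop (A : Type*) [AddGroup A] : TopologicalSpace (AddSubgroup A) :=
  TopologicalSpace.induced (fun H : AddSubgroup A => fun a : A => (a ∈ H : Prop))
    (@Pi.topologicalSpace A (fun _ => Prop) (fun _ => ⊥))

/-- Key lemma: any subgroup can be perturbed while respecting any finite set of
membership constraints. -/
lemma key_perturb (p n : ℕ) (hp : p.Prime) (hn : 1 ≤ n)
    (H : AddSubgroup (ℤ →₀ (Fin n → ZMod p))) (s : Finset (ℤ →₀ (Fin n → ZMod p))) :
    ∃ H' : AddSubgroup (ℤ →₀ (Fin n → ZMod p)),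
      H' ≠ H ∧ ∀ a ∈ s, (a ∈ H' ↔ a ∈ H) := by
  haveI : Fact p.Prime := ⟨hp⟩
  let M := ℤ →₀ (Fin n → ZMod p)
  set e := AddSubgroup.toZModSubmodule (M := M) p with he
  set K : Submodule (ZMod p) M := e H with hK
  have hmemK : ∀ a : M, a ∈ K ↔ a ∈ H := fun a => Iff.rfl
  have hmemsymm : ∀ (N : Submodule (ZMod p) M) (a : M), a ∈ e.symm N ↔ a ∈ N :=
    fun N a => Iff.rfl
  set W : Submodule (ZMod p) M := Submodule.span (ZMod p) (s : Set M) with hW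
  by_cases hsub : K ≤ W
  · -- enlarge H by an element outside W
    obtain ⟨k, hk⟩ := Infinite.exists_notMem_finset (s.biUnion Finsupp.support)
    have hv : (fun _ : Fin n => (1 : ZMod p)) ≠ 0 := by
      intro h
      have := congrFun h ⟨0, hn⟩
      simp only [Pi.zero_apply] at this
      exact one_ne_zero this
    set x : M := Finsupp.single k (fun _ => (1 : ZMod p)) with hx
    have hxW : x ∉ W := by
      intro hxw
      have hsupp : W ≤ Finsupp.supported (Fin n → ZMod p) (ZMod p)
          ((s.biUnion Finsupp.support : Finset ℤ) : Set ℤ) := by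
        rw [hW]
        apply Submodule.span_le.2
        intro f hf
        rw [SetLike.mem_coe, Finsupp.mem_supported]
        intro i hi
        simp only [Finset.coe_biUnion, Set.mem_iUnion, Finset.mem_coe]
        exact ⟨f, hf, hi⟩
      have h2 := hsupp hxw
      rw [Finsupp.mem_supported] at h2
      have hkx : k ∈ x.support := by
        rw [hx, Finsupp.mem_support_iff, Finsupp.single_eq_same]
        exact hv
      exact hk (h2 hkx)
    have hxK : x ∉ K := fun h => hxW (hsub h)
    refine ⟨e.symm (K ⊔ Submodule.span (ZMod p) {x}), ?_, ?_⟩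
    · intro h
      apply hxK
      have h2 : K ⊔ Submodule.span (ZMod p) {x} = K := by
        have : e.symm (K ⊔ Submodule.span (ZMod p) {x}) = e.symm K := by
          rw [h, hK, e.symm_apply_apply]
        exact e.symm.injective this
      have hx2 : x ∈ K ⊔ Submodule.span (ZMod p) {x} :=
        Submodule.mem_sup_right (Submodule.mem_span_singleton_self x)
      rwa [h2] at hx2
    · intro a ha
      have haW : a ∈ W := Submodule.subset_span (Finset.mem_coe.2 ha)
      rw [hmemsymm, ← hmemK]
      constructor
      · intro haH'
        rcases Submodule.mem_sup.1 haH' with ⟨y, hy, z, hz, rfl⟩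
        rcases Submodule.mem_span_singleton.1 hz with ⟨c, rfl⟩
        by_cases hc : c = 0
        · simpa [hc] using hy
        · exfalso
          apply hxW
          have : c • x = (y + c • x) - y := by abel
          have hcx : c • x ∈ W := by
            rw [this]
            exact Submodule.sub_mem W haW (hsub hy)
          have := Submodule.smul_mem W c⁻¹ hcx
          rwa [smul_smul, inv_mul_cancel₀ hc, one_smul] at this
      · intro haK
        exact Submodule.mem_sup_left haK
  · -- shrink H to H ⊓ W
    obtain ⟨x, hxK, hxW⟩ := Set.not_subset.1 (fun h => hsub h)
    refine ⟨e.symm (K ⊓ W), ?_, ?_⟩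
    · intro h
      have h2 : K ⊓ W = K := by
        have : e.symm (K ⊓ W) = e.symm K := by rw [h, hK, e.symm_apply_apply]
        exact e.symm.injective this
      apply hxW
      have : x ∈ K ⊓ W := h2.symm ▸ hxK
      exact this.2
    · intro a ha
      have haW : a ∈ W := Submodule.subset_span (Finset.mem_coe.2 ha)
      rw [hmemsymm, ← hmemK]
      exact ⟨fun h => h.1, fun h => ⟨h, haW⟩⟩

/-- For `p` prime and `n ≥ 1`, the space of subgroups of `A = ⊕_ℤ (ℤ/pℤ)^n` has no
isolated points. -/
theorem stmt6 (p n : ℕ) (hp : p.Prime) (hn : 1 ≤ n) :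
    ∀ H : AddSubgroup (ℤ →₀ (Fin n → ZMod p)),
      ¬ @IsOpen (AddSubgroup (ℤ →₀ (Fin n → ZMod p)))
          (addSubTop (ℤ →₀ (Fin n → ZMod p))) {H} := by
  intro H hopen
  set f : AddSubgroup (ℤ →₀ (Fin n → ZMod p)) → (ℤ →₀ (Fin n → ZMod p)) → Prop := fun H a => (a ∈ H : Prop) with hf
  rw [addSubTop, isOpen_induced_iff (t := @Pi.topologicalSpace (ℤ →₀ (Fin n → ZMod p)) (fun _ => Prop) (fun _ => ⊥))] at hopen
  obtain ⟨U, hU, hpre⟩ := hopen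
  have hfH : f H ∈ U := by
    have : H ∈ f ⁻¹' U := hpre.symm ▸ rfl
    exact this
  obtain ⟨I, u, hu, hIu⟩ := (isOpen_pi_iff (T := fun _ : ℤ →₀ (Fin n → ZMod p) => (⊥ : TopologicalSpace Prop))).1 hU (f H) hfH
  obtain ⟨H', hne, hagree⟩ := key_perturb p n hp hn H I
  apply hne
  have : f H' ∈ (I : Set (ℤ →₀ (Fin n → ZMod p))).pi u := by
    intro a ha
    have : f H' a = f H a := by
      simp only [hf]
      exact propext (hagree a ha)
    rw [this]
    exact (hu a ha).2
  have : H' ∈ f ⁻¹' U := hIu this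
  rw [hpre] at this
  exact this
end

section
/- Let U be an additive subgroup of R^n where R = F_p[x,x^{-1}], and suppose e(U) = e is finite and x^{be} U = U for an integer b ≥ 1. Then rk_{be}(U) = b · rk_e(U). -/
open LaurentPolynomial

/-- The ring endomorphism `ψ_m : R →+* R` of `R = F_p[x,x⁻¹]` sending `x ↦ x^m`
(given by multiplying exponents by `m`). -/
noncomputable def psi (p : ℕ) (m : ℕ) :
    LaurentPolynomial (ZMod p) →+* LaurentPolynomial (ZMod p) :=
  AddMonoidAlgebra.mapDomainRingHom (ZMod p)
    (AddMonoidHom.mk' (fun z : ℤ => (m : ℤ) * z) (fun a b => by ring))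

/-- Multiplication by `x^e` as an additive endomorphism of `R^n`. -/
noncomputable def xpow (p n : ℕ) (e : ℤ) :
    (Fin n → LaurentPolynomial (ZMod p)) →+ (Fin n → LaurentPolynomial (ZMod p)) :=
  DistribMulAction.toAddMonoidHom _ (T e : LaurentPolynomial (ZMod p))

/-- `rk_m(U)`: the maximal number of elements of `U` freely generating a free
module for the action of `R` on `U` via `x * u := x^m u`, i.e. acting through
`ψ_m`. -/
noncomputable def rkm (p n m : ℕ)
    (U : AddSubgroup (Fin n → LaurentPolynomial (ZMod p))) : ℕ :=
  sSup {d : ℕ | ∃ v : Fin d → (Fin n → LaurentPolynomial (ZMod p)),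
    (∀ i, v i ∈ U) ∧ ∀ c : Fin d → LaurentPolynomial (ZMod p),
      (∑ i, (psi p m) (c i) • v i) = 0 → c = 0}

/-! ### Auxiliary material -/

namespace Stmt9Aux

variable (p : ℕ)

local notation "A" => LaurentPolynomial (ZMod p)

noncomputable instance [Fact p.Prime] : IsDomain (LaurentPolynomial (ZMod p)) :=
  NoZeroDivisors.to_isDomain _

noncomputable instance [Fact p.Prime] : IsPrincipalIdealRing (LaurentPolynomial (ZMod p)) := by
  have := LaurentPolynomial.isLocalization (R := ZMod p)
  constructor
  intro I
  obtain ⟨a, ha⟩ :=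
    (IsPrincipalIdealRing.principal (I.comap (algebraMap (Polynomial (ZMod p)) A)))
  constructor
  use algebraMap (Polynomial (ZMod p)) A a
  rw [← IsLocalization.map_comap (Submonoid.powers (Polynomial.X (R := ZMod p))) A I, Ideal.under_def, ha]
  simp [Ideal.map_span, Ideal.submodule_span_eq]

/-- coefficient view -/
noncomputable def cfh : LaurentPolynomial (ZMod p) →+ (ℤ →₀ ZMod p) :=
  AddMonoidHom.mk' (fun f => f.coeff) fun _ _ => rfl

noncomputable abbrev cf {p : ℕ} (f : LaurentPolynomial (ZMod p)) : ℤ →₀ ZMod p := cfh p f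

lemma psi_apply (m : ℕ) (f : A) :
    cf (psi p m f) = Finsupp.mapDomain (fun z : ℤ => (m : ℤ) * z) (cf f) := rfl

lemma psi_apply' (m : ℕ) (f : A) :
    psi p m f = AddMonoidAlgebra.ofCoeff (Finsupp.mapDomain (fun z : ℤ => (m : ℤ) * z) f.coeff) := rfl

lemma psi_single (m : ℕ) (z : ℤ) (a : ZMod p) :
    psi p m (AddMonoidAlgebra.single z a) = AddMonoidAlgebra.single ((m : ℤ) * z) a := by
  rw [psi_apply', AddMonoidAlgebra.coeff_single, Finsupp.mapDomain_single]
  rfl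

lemma psi_T (m : ℕ) (z : ℤ) : psi p m (T z) = T ((m : ℤ) * z) := psi_single p m z 1

lemma psi_C (m : ℕ) (a : ZMod p) : psi p m (C a) = C a := by
  simpa using psi_single p m 0 a

lemma psi_psi (e b m : ℕ) (hm : m = b * e) (f : A) :
    psi p e (psi p b f) = psi p m f := by
  subst hm
  apply AddMonoidAlgebra.coeff_injective
  change cf (psi p e (psi p b f)) = cf (psi p (b * e) f)
  rw [psi_apply, psi_apply, psi_apply, ← Finsupp.mapDomain_comp]
  congr 1
  funext z
  simp only [Function.comp]
  push_cast
  ring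

lemma mul_inj (m : ℕ) (hm : 0 < m) : Function.Injective (fun z : ℤ => (m : ℤ) * z) := by
  intro a b hab
  simp only at hab
  have : (m : ℤ) ≠ 0 := by exact_mod_cast hm.ne'
  exact mul_left_cancel₀ this hab

lemma coeff_hit (m : ℕ) (hm : 0 < m) (c : A) (j z : ℤ) :
    cf (psi p m c * T j) ((m : ℤ) * z + j) = cf c z := by
  have h1 : cf (psi p m c * T j) ((m : ℤ) * z + j)
      = cf (psi p m c) ((m : ℤ) * z + j - j) * 1 :=
    AddMonoidAlgebra.coeff_mul_single_apply (psi p m c) 1 j _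
  rw [h1, add_sub_cancel_right, mul_one, psi_apply,
    Finsupp.mapDomain_apply (mul_inj m hm)]

lemma coeff_miss (m : ℕ) (c : A) (j j' z : ℤ)
    (hj : 0 ≤ j) (hj' : 0 ≤ j') (hjm : j < m) (hj'm : j' < m) (hne : j' ≠ j) :
    cf (psi p m c * T j') ((m : ℤ) * z + j) = 0 := by
  have heq : cf (psi p m c * T j') ((m : ℤ) * z + j)
      = cf (psi p m c) ((m : ℤ) * z + j - j') * 1 :=
    AddMonoidAlgebra.coeff_mul_single_apply (psi p m c) 1 j' _
  rw [heq, mul_one, psi_apply, Finsupp.mapDomain_notin_range]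
  rintro ⟨w, hw⟩
  simp only at hw
  have hdvd : (m : ℤ) ∣ (j - j') := ⟨w - z, by linarith⟩
  have habs : |j - j'| < (m : ℤ) := by rw [abs_lt]; omega
  have := Int.eq_zero_of_abs_lt_dvd hdvd habs
  omega

/-- The elements `T^k`, `0 ≤ k < m`, are independent over `ψ_m(R)`. -/
lemma key_indep (m : ℕ) (hm : 0 < m) (c : Fin m → A)
    (h : ∑ k : Fin m, psi p m (c k) * T (k : ℤ) = 0) : c = 0 := by
  funext k
  have hz : ∀ z : ℤ, cf (c k) z = 0 := by
    intro z
    have h2 : ∑ k' : Fin m, cf (psi p m (c k') * T ((k' : ℕ) : ℤ)) ((m : ℤ) * z + k) = 0 := by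
      have hsum : cf (∑ k' : Fin m, psi p m (c k') * T ((k' : ℕ) : ℤ))
          = ∑ k' : Fin m, cf (psi p m (c k') * T ((k' : ℕ) : ℤ)) :=
        map_sum (cfh p) (fun k' : Fin m => psi p m (c k') * T ((k' : ℕ) : ℤ)) Finset.univ
      rw [h] at hsum
      calc ∑ k' : Fin m, cf (psi p m (c k') * T ((k' : ℕ) : ℤ)) ((m : ℤ) * z + k)
          = (∑ k' : Fin m, cf (psi p m (c k') * T ((k' : ℕ) : ℤ))) ((m : ℤ) * z + k) := by
            rw [Finset.sum_apply']
        _ = 0 := by rw [← hsum]; rfl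
    rw [Finset.sum_eq_single k] at h2
    · rw [coeff_hit p m hm] at h2
      exact h2
    · intro k' _ hne
      exact coeff_miss p m (c k') (k : ℤ) (k' : ℤ) z (by positivity) (by positivity)
        (by exact_mod_cast k.2) (by exact_mod_cast k'.2)
        (fun hh => hne (Fin.ext (by exact_mod_cast hh)))
    · intro h3; exact absurd (Finset.mem_univ k) h3
  exact AddMonoidAlgebra.coeff_injective (Finsupp.ext hz)

/-! ### Twisted module structures -/

/-- `R` as a module over itself through `ψ_m`. -/
def TA (p m : ℕ) : Type := LaurentPolynomial (ZMod p)

noncomputable instance (m : ℕ) : AddCommGroup (TA p m) :=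
  inferInstanceAs (AddCommGroup (LaurentPolynomial (ZMod p)))

noncomputable instance (m : ℕ) : Module (LaurentPolynomial (ZMod p)) (TA p m) :=
  Module.compHom (LaurentPolynomial (ZMod p)) (psi p m)

def TA.of {p m : ℕ} (f : LaurentPolynomial (ZMod p)) : TA p m := f

def TA.to {p m : ℕ} (f : TA p m) : LaurentPolynomial (ZMod p) := f

lemma TA.to_smul {m : ℕ} (c : A) (f : TA p m) :
    TA.to (c • f) = psi p m c * TA.to f := rfl

noncomputable def taHom (m : ℕ) : TA p m →+ LaurentPolynomial (ZMod p) :=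
  AddMonoidHom.mk' TA.to fun _ _ => rfl

lemma taHom_sum {m : ℕ} {ι : Type*} (s : Finset ι) (g : ι → TA p m) :
    TA.to (∑ i ∈ s, g i) = ∑ i ∈ s, TA.to (g i) :=
  map_sum (taHom p m) g s

lemma ta_sum_smul {m d : ℕ} (c : Fin d → A) (v : Fin d → TA p m) :
    TA.to (∑ i, c i • v i) = ∑ i, psi p m (c i) * TA.to (v i) :=
  (taHom_sum p _ _).trans (Finset.sum_congr rfl fun i _ => rfl)

lemma TA.to_injective {m : ℕ} : Function.Injective (TA.to (p := p) (m := m)) :=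
  fun _ _ h => h

/-- `T^k`, `k < m`, span `R` over `ψ_m(R)`. -/
lemma key_span (m : ℕ) (hm : 0 < m) (g : A) :
    TA.of g ∈ Submodule.span A (Set.range fun k : Fin m => (TA.of (T (k : ℤ)) : TA p m)) := by
  refine AddMonoidAlgebra.induction g ?_ ?_
  · exact Submodule.zero_mem _
  · intro t a f _ _ hf
    have hadd : (TA.of (AddMonoidAlgebra.single t a + f) : TA p m)
        = TA.of (AddMonoidAlgebra.single t a) + TA.of f := rfl
    rw [hadd]
    refine Submodule.add_mem _ ?_ hf
    -- single t a = (C a * T (t / m)) • T (t % m)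
    have h0 : (0 : ℤ) ≤ t % (m : ℤ) := Int.emod_nonneg t (by exact_mod_cast hm.ne')
    have h1 : t % (m : ℤ) < m := Int.emod_lt_of_pos t (by exact_mod_cast hm)
    set r : ℕ := (t % (m : ℤ)).toNat with hr
    have hrm : r < m := by omega
    have hrz : (r : ℤ) = t % (m : ℤ) := Int.toNat_of_nonneg h0
    have hkey : (TA.of (AddMonoidAlgebra.single t a) : TA p m)
        = (C a * T (t / (m : ℤ))) • (TA.of (T ((⟨r, hrm⟩ : Fin m) : ℤ))) := by
      apply TA.to_injective
      rw [TA.to_smul]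
      show AddMonoidAlgebra.single t a = psi p m (C a * T (t / (m : ℤ))) * T ((r : ℤ))
      rw [map_mul, psi_C, psi_T, single_eq_C_mul_T, mul_assoc, ← T_add]
      congr 2
      rw [hrz]
      exact (Int.mul_ediv_add_emod t m).symm ▸ rfl
    rw [hkey]
    exact Submodule.smul_mem _ _ (Submodule.subset_span ⟨⟨r, hrm⟩, rfl⟩)

noncomputable def basisTA (m : ℕ) (hm : 0 < m) :
    Module.Basis (Fin m) A (TA p m) := by
  refine Module.Basis.mk (v := fun k : Fin m => (TA.of (T (k : ℤ)) : TA p m)) ?_ ?_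
  · rw [Fintype.linearIndependent_iff]
    intro c hc
    have h0 : ∑ k : Fin m, psi p m (c k) * T ((k : ℕ) : ℤ) = 0 := by
      have := congrArg TA.to hc
      rw [taHom_sum] at this
      exact this
    intro i
    have := key_indep p m hm c h0
    rw [this]; rfl
  · intro x _
    exact key_span p m hm (TA.to x)

/-- the ambient twisted module `R^n` -/
abbrev TV (p n m : ℕ) : Type := Fin n → TA p m

variable (n : ℕ)

def TV.of {p n m : ℕ} (v : Fin n → LaurentPolynomial (ZMod p)) : TV p n m := v

def TV.to {p n m : ℕ} (v : TV p n m) : Fin n → LaurentPolynomial (ZMod p) := v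

lemma TV.to_zero {p n m : ℕ} : (TV.to (0 : TV p n m)) = 0 := rfl

lemma TV.to_injective {m : ℕ} : Function.Injective (TV.to (p := p) (n := n) (m := m)) :=
  fun _ _ h => h

noncomputable def tvHom (m : ℕ) : TV p n m →+ (Fin n → LaurentPolynomial (ZMod p)) :=
  AddMonoidHom.mk' TV.to fun _ _ => rfl

lemma tv_sum_smul {m : ℕ} {ι : Type*} [Fintype ι] (c : ι → A) (v : ι → TV p n m) :
    TV.to (∑ i, c i • v i) = ∑ i, psi p m (c i) • TV.to (v i) := by
  refine (map_sum (tvHom p n m) (fun i => c i • v i) Finset.univ).trans ?_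
  exact Finset.sum_congr rfl fun i _ => rfl

/-- `U` is stable under multiplication by any element of `ψ_m(R)`. -/
lemma stab [Fact p.Prime] (m : ℕ) (U : AddSubgroup (Fin n → LaurentPolynomial (ZMod p)))
    (hfix : U.map (xpow p n m) = U) :
    ∀ (f : LaurentPolynomial (ZMod p)) (w : Fin n → LaurentPolynomial (ZMod p)),
      w ∈ U → (fun j => psi p m f * w j) ∈ U := by
  have hplus : ∀ w ∈ U, (fun j => T ((m : ℕ) : ℤ) * w j) ∈ U := by
    intro w hw
    have : (fun j => T ((m : ℕ) : ℤ) * w j) = xpow p n m w := rfl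
    rw [this, ← hfix]
    exact ⟨w, hw, rfl⟩
  have hminus : ∀ w ∈ U, (fun j => T (-((m : ℕ) : ℤ)) * w j) ∈ U := by
    intro w hw
    rw [← hfix] at hw
    obtain ⟨w', hw', hww⟩ := hw
    have : (fun j => T (-((m : ℕ) : ℤ)) * w j) = w' := by
      funext j
      rw [← hww]
      show T (-((m : ℕ) : ℤ)) * (T ((m : ℕ) : ℤ) * w' j) = w' j
      rw [← mul_assoc, ← T_add, neg_add_cancel, T_zero, one_mul]
    rw [this]
    exact hw'
  have wT : ∀ (z : ℤ), ∀ w ∈ U, (fun j => T ((m : ℤ) * z) * w j) ∈ U := by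
    intro z
    induction z using Int.induction_on with
    | zero => intro w hw; simpa [T_zero] using hw
    | succ k ih =>
      intro w hw
      have h1 := hplus _ (ih w hw)
      have : (fun j => T ((m : ℤ) * (k + 1)) * w j)
          = fun j => T ((m : ℕ) : ℤ) * (T ((m : ℤ) * k) * w j) := by
        funext j
        rw [show (m : ℤ) * ((k : ℤ) + 1) = ((m : ℕ) : ℤ) + (m : ℤ) * k by push_cast; ring,
          T_add, mul_assoc]
      rw [this]
      exact h1
    | pred k ih =>
      intro w hw
      have h1 := hminus _ (ih w hw)
      have : (fun j => T ((m : ℤ) * (-(k : ℤ) - 1)) * w j)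
          = fun j => T (-((m : ℕ) : ℤ)) * (T ((m : ℤ) * (-(k : ℤ))) * w j) := by
        funext j
        rw [show (m : ℤ) * (-(k : ℤ) - 1) = -((m : ℕ) : ℤ) + (m : ℤ) * (-(k : ℤ)) by push_cast; ring,
          T_add, mul_assoc]
      rw [this]
      exact h1
  have wC : ∀ (a : ZMod p), ∀ w ∈ U, (fun j => C a * w j) ∈ U := by
    intro a w hw
    have ha : (C a : A) = ((a.val : ℕ) : A) := by
      rw [← map_natCast (C (R := ZMod p)) a.val, ZMod.natCast_val, ZMod.cast_id]
    have : (fun j => C a * w j) = (a.val : ℕ) • w := by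
      funext j
      rw [ha]
      show ((a.val : ℕ) : A) * w j = ((a.val : ℕ) • w) j
      rw [Pi.smul_apply, nsmul_eq_mul]
    rw [this]
    exact AddSubgroup.nsmul_mem U hw a.val
  intro f w hw
  refine AddMonoidAlgebra.induction f ?_ ?_
  · have : (fun j => psi p m (0 : A) * w j) = (0 : Fin n → A) := by
      funext j; simp
    rw [this]
    exact U.zero_mem
  · intro t a g _ _ hg
    have hsplit : (fun j => psi p m (AddMonoidAlgebra.single t a + g) * w j)
        = (fun j => psi p m (AddMonoidAlgebra.single t a) * w j) + (fun j => psi p m g * w j) := by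
      funext j
      show psi p m (AddMonoidAlgebra.single t a + g) * w j = _ * w j + _ * w j
      rw [map_add, add_mul]
    rw [hsplit]
    refine U.add_mem ?_ hg
    have h1 : (fun j => psi p m (AddMonoidAlgebra.single t a) * w j)
        = fun j => C a * (T ((m : ℤ) * t) * w j) := by
      funext j
      rw [psi_single, single_eq_C_mul_T, mul_assoc]
    rw [h1]
    exact wC a _ (wT t w hw)

/-- `U` as a submodule of the twisted module. -/
noncomputable def US [Fact p.Prime] (m : ℕ) (U : AddSubgroup (Fin n → LaurentPolynomial (ZMod p)))
    (hfix : U.map (xpow p n m) = U) : Submodule A (TV p n m) where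
  carrier := {v : TV p n m | TV.to v ∈ U}
  add_mem' := fun ha hb => U.add_mem ha hb
  zero_mem' := U.zero_mem
  smul_mem' := by
    intro c v hv
    exact stab p n m U hfix c (TV.to v) hv

lemma mem_US [Fact p.Prime] {m : ℕ} {U : AddSubgroup (Fin n → LaurentPolynomial (ZMod p))}
    {hfix : U.map (xpow p n m) = U} (v : TV p n m) :
    v ∈ US p n m U hfix ↔ TV.to v ∈ U := Iff.rfl

/-- raw independence from a basis -/
lemma raw_indep [Fact p.Prime] {m : ℕ} {U : AddSubgroup (Fin n → LaurentPolynomial (ZMod p))}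
    {hfix : U.map (xpow p n m) = U} {ι : Type*} [Fintype ι]
    (w : ι → US p n m U hfix) (hw : LinearIndependent A w)
    (c : ι → A) (hc : ∑ i, psi p m (c i) • TV.to ((w i : TV p n m)) = 0) : c = 0 := by
  have h1 : TV.to (∑ i, c i • ((w i : TV p n m))) = 0 := by
    rw [tv_sum_smul]; exact hc
  have h2 : (∑ i, c i • ((w i : TV p n m))) = 0 := TV.to_injective p n h1
  have h3 : (∑ i, c i • w i) = 0 := by
    have hcoe : ((∑ i, c i • w i : US p n m U hfix) : TV p n m)
        = ∑ i, c i • ((w i : TV p n m)) := by simp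
    rw [← hcoe] at h2
    exact ZeroMemClass.coe_eq_zero.mp h2
  have := Fintype.linearIndependent_iff.mp hw c h3
  funext i; exact this i

/-- `rkm` equals the cardinality of any basis of `U` for the twisted structure. -/
lemma rkm_eq_of_basis [Fact p.Prime] (m d : ℕ) (U : AddSubgroup (Fin n → LaurentPolynomial (ZMod p)))
    (hfix : U.map (xpow p n m) = U)
    (B : Module.Basis (Fin d) A (US p n m U hfix)) : rkm p n m U = d := by
  classical
  have hmem : d ∈ {d' : ℕ | ∃ v : Fin d' → (Fin n → LaurentPolynomial (ZMod p)),
      (∀ i, v i ∈ U) ∧ ∀ c : Fin d' → LaurentPolynomial (ZMod p),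
        (∑ i, (psi p m) (c i) • v i) = 0 → c = 0} := by
    refine ⟨fun i => TV.to ((B i : TV p n m)), fun i => (B i).2, ?_⟩
    intro c hc
    exact raw_indep p n (fun i => B i) B.linearIndependent c hc
  have hub : ∀ s ∈ {d' : ℕ | ∃ v : Fin d' → (Fin n → LaurentPolynomial (ZMod p)),
      (∀ i, v i ∈ U) ∧ ∀ c : Fin d' → LaurentPolynomial (ZMod p),
        (∑ i, (psi p m) (c i) • v i) = 0 → c = 0}, s ≤ d := by
    rintro s ⟨v, hvU, hvI⟩
    haveI : Module.Finite A (US p n m U hfix) := Module.Finite.of_basis B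
    let v' : Fin s → US p n m U hfix := fun i => ⟨TV.of (v i), hvU i⟩
    have hli : LinearIndependent A v' := by
      rw [Fintype.linearIndependent_iff]
      intro c hc
      have h3 : ∑ i, c i • (TV.of (v i) : TV p n m) = 0 := by
        have h2 := congrArg (Submodule.subtype (US p n m U hfix)) hc
        simpa [map_sum, v'] using h2
      have h4 : ∑ i, psi p m (c i) • v i = 0 := by
        have h5 := congrArg TV.to h3
        rw [tv_sum_smul, TV.to_zero] at h5
        exact h5
      have := hvI c h4
      intro i; rw [this]; rfl
    have := LinearIndependent.fintype_card_le_finrank hli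
    rw [Module.finrank_eq_card_basis B] at this
    simpa using this
  unfold rkm
  exact le_antisymm (csSup_le ⟨d, hmem⟩ hub) (le_csSup ⟨d, hub⟩ hmem)

/-- The key computation: regrouping a `ψ_{be}`-combination of `T^{ke} • u i`
as a `ψ_e`-combination of the `u i`. -/
lemma calc1 [Fact p.Prime] (e b d : ℕ) (c : Fin b × Fin d → A) (u : Fin d → Fin n → A) :
    ∑ x : Fin b × Fin d, psi p (b * e) (c x) •
        (fun j => psi p e (T ((x.1 : ℕ) : ℤ)) * u x.2 j)
      = ∑ i, psi p e (∑ k : Fin b, psi p b (c (k, i)) * T ((k : ℕ) : ℤ)) • u i := by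
  funext j
  simp only [Finset.sum_apply, Pi.smul_apply, smul_eq_mul]
  rw [Fintype.sum_prod_type]
  rw [Finset.sum_comm]
  refine Finset.sum_congr rfl fun i _ => ?_
  rw [map_sum (psi p e), Finset.sum_mul]
  refine Finset.sum_congr rfl fun k _ => ?_
  rw [map_mul (psi p e), psi_psi p e b (b * e) rfl, mul_assoc]

/-- From a basis of `U` for the `ψ_e`-structure, a basis of `U` for the
`ψ_{be}`-structure of `b` times the size. -/
noncomputable def basisBE [Fact p.Prime] (e b d : ℕ) (he : 0 < e) (hb : 0 < b)
    (U : AddSubgroup (Fin n → LaurentPolynomial (ZMod p)))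
    (hfix : U.map (xpow p n e) = U)
    (hfixbe : U.map (xpow p n (b * e)) = U)
    (Be : Module.Basis (Fin d) A (US p n e U hfix)) :
    Module.Basis (Fin b × Fin d) A (US p n (b * e) U hfixbe) := by
  classical
  set u : Fin d → (Fin n → LaurentPolynomial (ZMod p)) :=
    fun i => TV.to ((Be i : TV p n e)) with hu_def
  have hu : ∀ i, u i ∈ U := fun i => (Be i).2
  have hraw : ∀ c : Fin d → A, (∑ i, psi p e (c i) • u i) = 0 → c = 0 :=
    fun c hc => raw_indep p n (fun i => Be i) Be.linearIndependent c hc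
  set w : Fin b × Fin d → US p n (b * e) U hfixbe :=
    fun x => ⟨TV.of (fun j => psi p e (T ((x.1 : ℕ) : ℤ)) * u x.2 j),
      stab p n e U hfix (T ((x.1 : ℕ) : ℤ)) (u x.2) (hu x.2)⟩ with hw_def
  have hw_to : ∀ x, TV.to ((w x : TV p n (b * e)))
      = fun j => psi p e (T ((x.1 : ℕ) : ℤ)) * u x.2 j := fun x => rfl
  refine Module.Basis.mk (v := w) ?_ ?_
  · -- linear independence
    rw [Fintype.linearIndependent_iff]
    intro c hc
    have h3 : ∑ x, c x • ((w x : TV p n (b * e))) = 0 := by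
      have h2 := congrArg (Submodule.subtype (US p n (b * e) U hfixbe)) hc
      simpa [map_sum] using h2
    have h4 : ∑ x, psi p (b * e) (c x) • TV.to ((w x : TV p n (b * e))) = 0 := by
      have h5 := congrArg TV.to h3
      rw [tv_sum_smul, TV.to_zero] at h5
      exact h5
    have h6 : ∑ i, psi p e (∑ k : Fin b, psi p b (c (k, i)) * T ((k : ℕ) : ℤ)) • u i = 0 := by
      rw [← calc1 p n e b d c u]
      exact h4
    have h7 := hraw _ h6
    intro x
    have h8 : ∀ i, ∑ k : Fin b, psi p b (c (k, i)) * T ((k : ℕ) : ℤ) = 0 :=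
      fun i => congrFun h7 i
    have h9 := key_indep p b hb (fun k => c (k, x.2)) (h8 x.2)
    calc c x = c (x.1, x.2) := by rw [Prod.mk.eta]
      _ = 0 := congrFun h9 x.1
  · -- spanning
    rintro x -
    have hxU : TV.to (x : TV p n (b * e)) ∈ U := x.2
    set xe : US p n e U hfix := ⟨TV.of (TV.to (x : TV p n (b * e))), hxU⟩ with hxe_def
    set r : Fin d → A := fun i => Be.repr xe i with hr_def
    have hrepr : ∑ i, r i • Be i = xe := Be.sum_repr xe
    have hrepr2 : ∑ i, r i • ((Be i : TV p n e)) = TV.of (TV.to (x : TV p n (b * e))) := by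
      have := congrArg (Submodule.subtype (US p n e U hfix)) hrepr
      simpa [map_sum] using this
    have hrepr3 : ∑ i, psi p e (r i) • u i = TV.to (x : TV p n (b * e)) := by
      have h5 := congrArg TV.to hrepr2
      rw [tv_sum_smul] at h5
      exact h5
    have hcoef : ∀ i, ∃ a : Fin b → A,
        ∑ k, psi p b (a k) * T ((k : ℕ) : ℤ) = r i := by
      intro i
      obtain ⟨a, ha⟩ := (Submodule.mem_span_range_iff_exists_fun A).mp (key_span p b hb (r i))
      refine ⟨a, ?_⟩
      have := congrArg TA.to ha
      rw [taHom_sum] at this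
      exact this
    choose a ha using hcoef
    set c : Fin b × Fin d → A := fun x => a x.2 x.1 with hc_def
    have hkey : TV.to (x : TV p n (b * e))
        = ∑ y, psi p (b * e) (c y) • TV.to ((w y : TV p n (b * e))) := by
      have hkey0 : ∑ y, psi p (b * e) (c y) • TV.to ((w y : TV p n (b * e)))
          = ∑ y : Fin b × Fin d, psi p (b * e) (c y) •
              (fun j => psi p e (T ((y.1 : ℕ) : ℤ)) * u y.2 j) :=
        Finset.sum_congr rfl fun y _ => by rw [hw_to]
      rw [hkey0, calc1 p n e b d c u, ← hrepr3]
      refine Finset.sum_congr rfl fun i _ => ?_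
      congr 1
      rw [ha i]
    have hcoe : ((∑ y, c y • w y : US p n (b * e) U hfixbe) : TV p n (b * e))
        = ∑ y, c y • ((w y : TV p n (b * e))) := by simp
    have h10 : ((x : TV p n (b * e))) = ((∑ y, c y • w y : US p n (b * e) U hfixbe) : TV p n (b * e)) := by
      rw [hcoe]
      apply TV.to_injective p n
      rw [tv_sum_smul]
      exact hkey
    have hfin : x = ∑ y, c y • w y := Subtype.coe_injective h10
    rw [hfin]
    exact Submodule.sum_smul_mem _ c (fun y _ => Submodule.subset_span ⟨y, rfl⟩)

end Stmt9Aux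

/-- If `U` is an additive subgroup of `R^n` with `e(U) = e` finite (`e` is the least
positive integer with `x^e U = U`) and `x^(be) U = U` for an integer `b ≥ 1`, then
`rk_{be}(U) = b · rk_e(U)`. -/
theorem stmt9 (p n : ℕ) [Fact p.Prime]
    (U : AddSubgroup (Fin n → LaurentPolynomial (ZMod p))) (e b : ℕ)
    (he : 0 < e) (hb : 1 ≤ b)
    (hfix : U.map (xpow p n e) = U)
    (hmin : ∀ e' : ℕ, 0 < e' → U.map (xpow p n e') = U → e ≤ e')
    (hfixbe : U.map (xpow p n (b * e)) = U) :
    rkm p n (b * e) U = b * rkm p n e U := by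
  classical
  have hb0 : 0 < b := hb
  have hfixbe' : U.map (xpow p n ((b * e : ℕ) : ℤ)) = U := by
    have : ((b * e : ℕ) : ℤ) = (b : ℤ) * (e : ℤ) := by push_cast; ring
    rw [this]
    exact hfixbe
  obtain ⟨d, Be⟩ := Submodule.basisOfPid
    (Pi.basis fun _ : Fin n => Stmt9Aux.basisTA p e he) (Stmt9Aux.US p n e U hfix)
  have h1 : rkm p n e U = d := Stmt9Aux.rkm_eq_of_basis p n e d U hfix Be
  have Bbe := Stmt9Aux.basisBE p n e b d he hb0 U hfix hfixbe' Be
  have h2 : rkm p n (b * e) U = b * d :=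
    Stmt9Aux.rkm_eq_of_basis p n (b * e) (b * d) U hfixbe'
      (Bbe.reindex finProdFinEquiv)
  rw [h1, h2]
end

section
/- Let R = F_p[x,x^{-1}], and let U ⊆ U_m be R-submodules of R^n such that U_m → U pointwise and rk(U) = rk(U_m) for all m. Then the sequence U_m stabilizes to U (i.e., U_m = U for all sufficiently large m). -/
open LaurentPolynomial

theorem lpid (K : Type) [Field K] : IsPrincipalIdealRing (LaurentPolynomial K) := by
  haveI := LaurentPolynomial.isLocalization (R := K)
  constructor; intro J
  obtain ⟨a, ha⟩ := (IsPrincipalIdealRing.principal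
    (J.comap (algebraMap (Polynomial K) (LaurentPolynomial K))))
  refine ⟨⟨algebraMap (Polynomial K) _ a, ?_⟩⟩
  conv_lhs => rw [← IsLocalization.map_comap (Submonoid.powers (Polynomial.X : Polynomial K))
    (LaurentPolynomial K) J]
  rw [Ideal.under_def, ha, Ideal.submodule_span_eq, Ideal.map_span]
  simp


set_option maxHeartbeats 800000 in
theorem finquot (K : Type) [Field K] [Finite K] (a : LaurentPolynomial K) (ha : a ≠ 0) :
    Finite (LaurentPolynomial K ⧸ Ideal.span {a}) := by
  haveI : IsDomain (LaurentPolynomial K) := NoZeroDivisors.to_isDomain _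
  obtain ⟨n, f', hf'⟩ := LaurentPolynomial.exists_T_pow a
  have hf'0 : f' ≠ 0 := fun h => by
    rw [h, map_zero] at hf'
    exact (mul_ne_zero ha (isUnit_T (n : ℤ)).ne_zero) hf'.symm
  obtain ⟨g, hg, hXg⟩ := f'.exists_eq_pow_rootMultiplicity_mul_and_not_dvd hf'0 0
  rw [map_zero, sub_zero] at hg hXg
  set j := f'.rootMultiplicity 0
  have hg0 : g ≠ 0 := fun h => hXg (h ▸ dvd_zero Polynomial.X)
  have hgl : Polynomial.toLaurent g = a * T ((n : ℤ) - j) := by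
    have h1 : Polynomial.toLaurent f' = T (j : ℤ) * Polynomial.toLaurent g := by
      rw [hg, map_mul, Polynomial.toLaurent_X_pow]
    have h2 : a * T (n : ℤ) = T (j : ℤ) * Polynomial.toLaurent g := by rw [← h1, hf']
    have h3 := congrArg (fun z => T (-(j : ℤ)) * z) h2
    simp only [← mul_assoc] at h3
    rw [← T_add, neg_add_cancel, T_zero, one_mul] at h3
    rw [← h3, mul_comm (T (-(j:ℤ))) a, mul_assoc, ← T_add]
    ring_nf
  have hspan : Ideal.span {a} = Ideal.span {Polynomial.toLaurent g} := by
    rw [Ideal.span_singleton_eq_span_singleton]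
    exact ⟨(isUnit_T ((n : ℤ) - j)).unit, hgl.symm⟩
  rw [hspan]
  set I := Ideal.span {(Polynomial.toLaurent g : LaurentPolynomial K)} with hI
  set φ : Polynomial K →+* LaurentPolynomial K ⧸ I :=
    (Ideal.Quotient.mk I).comp (Polynomial.toLaurent (R := K)) with hφ
  have hφg : φ g = 0 :=
    Ideal.Quotient.eq_zero_iff_mem.mpr (Ideal.subset_span rfl)
  have hc : g.coeff 0 ≠ 0 := fun h => hXg (Polynomial.X_dvd_iff.mpr h)
  set c := g.coeff 0
  set u : Polynomial K := Polynomial.C (-c⁻¹) * g.divX with hu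
  have hTu : Ideal.Quotient.mk I (T 1) * φ u = 1 := by
    have hX : Polynomial.X * g.divX + Polynomial.C c = g := Polynomial.X_mul_divX_add g
    have h4 := congrArg φ hX
    rw [map_add, map_mul, hφg] at h4
    have hphiX : φ Polynomial.X = Ideal.Quotient.mk I (T 1) := by
      simp [hφ, Polynomial.toLaurent_X]
    rw [hphiX] at h4
    have h2 : Ideal.Quotient.mk I (T 1) * φ (g.divX) = -φ (Polynomial.C c) := by
      linear_combination h4
    rw [hu, map_mul, ← mul_assoc, mul_comm (Ideal.Quotient.mk I (T 1)) (φ (Polynomial.C (-c⁻¹))),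
      mul_assoc, h2]
    rw [← map_neg, ← Polynomial.C_neg, ← map_mul, ← Polynomial.C_mul, neg_mul_neg,
      inv_mul_cancel₀ hc]
    simp [hφ]
  have hsurj : Function.Surjective φ := by
    intro z
    obtain ⟨f, rfl⟩ := Ideal.Quotient.mk_surjective z
    obtain ⟨m, h, hh⟩ := LaurentPolynomial.exists_T_pow f
    refine ⟨h * u ^ m, ?_⟩
    have hTm : Ideal.Quotient.mk I (T (m : ℤ)) * φ (u ^ m) = 1 := by
      have hT1 : (T ((m : ℕ) : ℤ) : LaurentPolynomial K) = T 1 ^ m := by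
        rw [T_pow, mul_one]
      rw [hT1, map_pow, map_pow, ← mul_pow, hTu, one_pow]
    have hfh : φ h = Ideal.Quotient.mk I f * Ideal.Quotient.mk I (T (m : ℤ)) := by
      show Ideal.Quotient.mk I (Polynomial.toLaurent h) = _
      rw [← map_mul, hh]
    rw [map_mul, hfh, mul_assoc, hTm, mul_one]
  have hker : Ideal.span {g} ≤ RingHom.ker φ := by
    rw [Ideal.span_le, Set.singleton_subset_iff]
    exact hφg
  have hfinAdj : Finite (Polynomial K ⧸ Ideal.span {g}) := by
    have pb : PowerBasis K (AdjoinRoot g) := AdjoinRoot.powerBasis hg0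
    have : Module.Finite K (AdjoinRoot g) := pb.finite
    exact Module.finite_of_finite K (M := AdjoinRoot g)
  refine Finite.of_surjective (Ideal.Quotient.lift _ φ fun x hx => hker hx) fun z => ?_
  obtain ⟨f, hf⟩ := hsurj z
  exact ⟨Ideal.Quotient.mk _ f, hf⟩

theorem fintors (K : Type) [Field K] [Finite K] (M : Type) [AddCommGroup M]
    [Module (LaurentPolynomial K) M] [Module.Finite (LaurentPolynomial K) M]
    (htors : ∀ m : M, ∃ a : LaurentPolynomial K, a ≠ 0 ∧ a • m = 0) : Finite M := by
  classical
  haveI : IsDomain (LaurentPolynomial K) := NoZeroDivisors.to_isDomain _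
  obtain ⟨s, hs⟩ := Module.Finite.fg_top (R := LaurentPolynomial K) (M := M)
  choose a h0 hann using htors
  set b : LaurentPolynomial K := ∏ x ∈ s, a x with hb
  have hb0 : b ≠ 0 := Finset.prod_ne_zero_iff.mpr fun x _ => h0 x
  have hbs : ∀ x ∈ s, b • x = 0 := by
    intro x hx
    rw [hb, ← Finset.prod_erase_mul s a hx, mul_smul, hann, smul_zero]
  have hball : Module.IsTorsionBy (LaurentPolynomial K) M b := by
    intro m
    have hm : m ∈ Submodule.torsionBy (LaurentPolynomial K) M b := by
      have : (⊤ : Submodule (LaurentPolynomial K) M)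
          ≤ Submodule.torsionBy (LaurentPolynomial K) M b := by
        rw [← hs, Submodule.span_le]
        intro x hx
        exact (Submodule.mem_torsionBy_iff _ _).mpr (hbs x hx)
      exact this Submodule.mem_top
    exact (Submodule.mem_torsionBy_iff _ _).mp hm
  letI := hball.module
  haveI : Module.Finite (LaurentPolynomial K ⧸ Ideal.span {b}) M :=
    Module.Finite.of_restrictScalars_finite (LaurentPolynomial K) _ M
  haveI := finquot K b hb0
  exact Module.finite_of_finite (LaurentPolynomial K ⧸ Ideal.span {b})

set_option maxHeartbeats 1000000 in
/-- Let `R = F_p[x,x⁻¹]` and `U ⊆ U_m` be `R`-submodules of `R^n` with `U_m → U`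
pointwise and `rk(U) = rk(U_m)` for all `m`. Then `U_m` stabilizes to `U`. -/
theorem stmt11 (p n : ℕ) [Fact p.Prime]
    (U : Submodule (LaurentPolynomial (ZMod p)) (Fin n → LaurentPolynomial (ZMod p)))
    (Um : ℕ → Submodule (LaurentPolynomial (ZMod p))
      (Fin n → LaurentPolynomial (ZMod p)))
    (hle : ∀ m, U ≤ Um m)
    (hconv : ∀ v : Fin n → LaurentPolynomial (ZMod p),
      ∀ᶠ m in Filter.atTop, (v ∈ Um m ↔ v ∈ U))
    (hrk : ∀ m, Module.rank (LaurentPolynomial (ZMod p)) (Um m)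
      = Module.rank (LaurentPolynomial (ZMod p)) U) :
    ∀ᶠ m in Filter.atTop, Um m = U := by
  classical
  set R := LaurentPolynomial (ZMod p) with hR
  haveI : IsDomain R := NoZeroDivisors.to_isDomain _
  haveI : IsPrincipalIdealRing R := lpid _
  -- rank / torsion step
  have key : ∀ m, ∀ v ∈ Um m, ∃ a : R, a ≠ 0 ∧ a • v ∈ U := by
    intro m v hv
    by_contra hcon
    push_neg at hcon
    obtain ⟨r, b⟩ := Submodule.basisOfPid (Pi.basisFun R (Fin n)) U
    have hb : LinearIndependent R (fun i => ((b i : U) : Fin n → R)) :=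
      b.linearIndependent.map' U.subtype (Submodule.ker_subtype U)
    set f : Fin (r + 1) → (Fin n → R) := Fin.cons v (fun i => ((b i : U) : Fin n → R)) with hf
    have hli : LinearIndependent R f := by
      refine LinearIndependent.fin_cons' v _ hb ?_
      intro c y hy hcy
      by_contra hc
      refine hcon c hc ?_
      have hyU : y ∈ U := by
        have : Submodule.span R (Set.range fun i => ((b i : U) : Fin n → R)) ≤ U := by
          rw [Submodule.span_le]
          rintro _ ⟨i, rfl⟩
          exact (b i : U).2
        exact this hy
      have : c • v = -y := by
        have := hcy
        linear_combination (norm := module) this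
      rw [this]
      exact U.neg_mem hyU
    have hmem : ∀ i, f i ∈ Um m := by
      intro i
      refine Fin.cases ?_ ?_ i
      · simpa [hf] using hv
      · intro j
        simpa [hf] using hle m (b j : U).2
    set g : Fin (r + 1) → (Um m) := fun i => ⟨f i, hmem i⟩ with hg
    have hgli : LinearIndependent R g := by
      apply LinearIndependent.of_comp (Um m).subtype
      convert hli
      rfl
    have h1 : ((r : Cardinal) + 1) ≤ Module.rank R (Um m) := by
      have := hgli.cardinal_le_rank
      simpa using this
    have h2 : Module.rank R U = r := by
      rw [rank_eq_card_basis b, Fintype.card_fin]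
    rw [hrk m, h2] at h1
    norm_cast at h1
    omega
  -- the torsion quotient is finite
  set Tors := Submodule.torsion R ((Fin n → R) ⧸ U) with hT
  haveI : Module.Finite R ↥Tors :=
    Module.Finite.iff_fg.mpr (IsNoetherian.noetherian _)
  haveI : Finite ↥Tors := by
    apply fintors (ZMod p)
    rintro ⟨x, hx⟩
    obtain ⟨⟨a, haR⟩, hax⟩ := hx
    refine ⟨a, nonZeroDivisors.ne_zero haR, ?_⟩
    ext
    simpa using hax
  -- choose representatives
  set rep : ↥Tors → (Fin n → R) := fun t => (U.mkQ_surjective t.1).choose with hrep'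
  have hrep : ∀ t : ↥Tors, U.mkQ (rep t) = t.1 := fun t => (U.mkQ_surjective t.1).choose_spec
  have hall : ∀ᶠ m in Filter.atTop, ∀ t : ↥Tors, (rep t ∈ Um m ↔ rep t ∈ U) :=
    Filter.eventually_all.mpr fun t => hconv (rep t)
  filter_upwards [hall] with m hm
  refine le_antisymm ?_ (hle m)
  intro v hv
  obtain ⟨a, ha0, haU⟩ := key m v hv
  have htv : U.mkQ v ∈ Tors := by
    refine ⟨⟨a, mem_nonZeroDivisors_of_ne_zero ha0⟩, ?_⟩
    show a • U.mkQ v = 0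
    rw [← map_smul]
    exact (Submodule.Quotient.mk_eq_zero U).mpr haU
  set t : ↥Tors := ⟨U.mkQ v, htv⟩ with ht
  have h5 : U.mkQ (rep t) = U.mkQ v := hrep t
  have hdiff : rep t - v ∈ U := by
    rw [← Submodule.Quotient.eq]
    exact h5
  have hrt : rep t ∈ Um m := by
    have := (Um m).add_mem (hle m hdiff) hv
    simpa using this
  have hrtU : rep t ∈ U := (hm t).mp hrt
  have := U.sub_mem hrtU hdiff
  simpa using this
end

section
/- Let p be prime and b > 0, n > 0, 0 < r ≤ nb be integers. Then there exists an additive subgroup U ⊆ R^n, where R = F_p[x,x^{-1}], such that e(U) = b and rk_b(U) = r. -/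
open LaurentPolynomial

namespace Stmt12Aux

def MB (p n b : ℕ) : Type := Fin n → LaurentPolynomial (ZMod p)

noncomputable instance (p n b : ℕ) : AddCommGroup (MB p n b) :=
  inferInstanceAs (AddCommGroup (Fin n → LaurentPolynomial (ZMod p)))

noncomputable instance (p n b : ℕ) : Module (LaurentPolynomial (ZMod p)) (MB p n b) :=
  Module.compHom (Fin n → LaurentPolynomial (ZMod p)) (psi p b)

def toMB (p n b : ℕ) (v : Fin n → LaurentPolynomial (ZMod p)) : MB p n b := v
def fromMB (p n b : ℕ) (v : MB p n b) : Fin n → LaurentPolynomial (ZMod p) := v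

lemma toMB_smul (p n b : ℕ) (c : LaurentPolynomial (ZMod p))
    (v : Fin n → LaurentPolynomial (ZMod p)) :
    c • toMB p n b v = toMB p n b (psi p b c • v) := rfl

lemma fromMB_smul (p n b : ℕ) (c : LaurentPolynomial (ZMod p)) (v : MB p n b) :
    fromMB p n b (c • v) = psi p b c • fromMB p n b v := rfl

lemma fromMB_add (p n b : ℕ) (u v : MB p n b) :
    fromMB p n b (u + v) = fromMB p n b u + fromMB p n b v := rfl

lemma fromMB_zero (p n b : ℕ) : fromMB p n b 0 = 0 := rfl

lemma fromMB_toMB (p n b : ℕ) (v : Fin n → LaurentPolynomial (ZMod p)) :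
    fromMB p n b (toMB p n b v) = v := rfl

variable {p b : ℕ}

lemma psi_apply (p b : ℕ) (f : LaurentPolynomial (ZMod p)) :
    psi p b f = AddMonoidAlgebra.ofCoeff (Finsupp.mapDomain (fun z : ℤ => (b:ℤ) * z) f.coeff) := rfl

lemma psi_T (p b : ℕ) (k : ℤ) : psi p b (T k) = T (b * k) := by
  rw [psi_apply]
  show AddMonoidAlgebra.ofCoeff (Finsupp.mapDomain _ (Finsupp.single k 1)) =
    AddMonoidAlgebra.ofCoeff (Finsupp.single ((b:ℤ)*k) 1)
  rw [Finsupp.mapDomain_single]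

lemma psi_injective (p b : ℕ) (hb : 0 < b) : Function.Injective (psi p b) := by
  intro f g h
  rw [psi_apply, psi_apply] at h
  refine AddMonoidAlgebra.coeff_injective
    (Finsupp.mapDomain_injective ?_ (AddMonoidAlgebra.ofCoeff_injective h))
  intro z1 z2 hz
  have hb' : (b:ℤ) ≠ 0 := by exact_mod_cast hb.ne'
  exact mul_left_cancel₀ hb' hz

/-- residue support predicate -/
def ResP (p b : ℕ) (α : ℤ) (f : LaurentPolynomial (ZMod p)) : Prop :=
  ∀ k ∈ f.coeff.support, k % (b : ℤ) = α

/-- kills residue j -/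
def KillP (p b : ℕ) (j : ℤ) (f : LaurentPolynomial (ZMod p)) : Prop :=
  ∀ k ∈ f.coeff.support, k % (b : ℤ) ≠ j

lemma KillP.zero (j : ℤ) : KillP p b j 0 := by
  intro k hk
  simp [Finsupp.support_zero] at hk

lemma KillP.add {j : ℤ} {f g : LaurentPolynomial (ZMod p)}
    (hf : KillP p b j f) (hg : KillP p b j g) : KillP p b j (f + g) := by
  classical
  intro k hk
  rcases Finset.mem_union.mp (Finsupp.support_add (g₁ := f.coeff) (g₂ := g.coeff) hk) with h | h
  · exact hf k h
  · exact hg k h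

lemma ResP.killP {α j : ℤ} {f : LaurentPolynomial (ZMod p)}
    (h : ResP p b α f) (hne : α ≠ j) : KillP p b j f :=
  fun k hk => (h k hk).symm ▸ hne

lemma ResP.zero (α : ℤ) : ResP p b α 0 := by
  intro k hk; simp [Finsupp.support_zero] at hk

lemma ResP.add {α : ℤ} {f g : LaurentPolynomial (ZMod p)}
    (hf : ResP p b α f) (hg : ResP p b α g) : ResP p b α (f + g) := by
  classical
  intro k hk
  rcases Finset.mem_union.mp (Finsupp.support_add (g₁ := f.coeff) (g₂ := g.coeff) hk) with h | h
  · exact hf k h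
  · exact hg k h

lemma ResP.sub {α : ℤ} {f g : LaurentPolynomial (ZMod p)}
    (hf : ResP p b α f) (hg : ResP p b α g) : ResP p b α (f - g) := by
  classical
  intro k hk
  rcases Finset.mem_union.mp (Finsupp.support_sub (f := f.coeff) (g := g.coeff) hk) with h | h
  · exact hf k h
  · exact hg k h

lemma resP_mul0 {α : ℤ} {g f : LaurentPolynomial (ZMod p)}
    (hg : ResP p b 0 g) (hf : ResP p b α f) : ResP p b α (g * f) := by
  classical
  intro k hk
  have := AddMonoidAlgebra.support_coeff_mul_subset g f hk
  rcases Finset.mem_add.mp this with ⟨k1, h1, k2, h2, rfl⟩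
  obtain ⟨z, rfl⟩ : (b:ℤ) ∣ k1 := Int.dvd_of_emod_eq_zero (hg k1 h1)
  rw [add_comm, Int.add_mul_emod_self_left]
  exact hf k2 h2

lemma killP_mul_left {j : ℤ} {g f : LaurentPolynomial (ZMod p)}
    (hg : ResP p b 0 g) (hf : KillP p b j f) : KillP p b j (g * f) := by
  classical
  intro k hk
  have := AddMonoidAlgebra.support_coeff_mul_subset g f hk
  rcases Finset.mem_add.mp this with ⟨k1, h1, k2, h2, rfl⟩
  obtain ⟨z, rfl⟩ : (b:ℤ) ∣ k1 := Int.dvd_of_emod_eq_zero (hg k1 h1)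
  rw [add_comm, Int.add_mul_emod_self_left]
  exact hf k2 h2

lemma eq_zero_of_resP_killP {j : ℤ} {f : LaurentPolynomial (ZMod p)}
    (h : ResP p b j f) (h2 : KillP p b j f) : f = 0 := by
  rw [← AddMonoidAlgebra.coeff_eq_zero, ← Finsupp.support_eq_empty]
  refine Finset.eq_empty_of_forall_notMem fun k hk => ?_
  exact h2 k hk (h k hk)

lemma resP_T {m α : ℤ} (hm : m % (b:ℤ) = α) : ResP p b α (T m) := by
  intro k hk
  have : k = m := Finset.mem_singleton.mp (Finsupp.support_single_subset (a := m) (b := (1 : ZMod p)) hk)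
  exact this ▸ hm

lemma resP_one : ResP p b 0 (1 : LaurentPolynomial (ZMod p)) := by
  have := resP_T (p := p) (b := b) (m := 0) (α := 0) (by simp)
  rwa [T_zero] at this

lemma resP_onePlusTb : ResP p b 0 (1 + T (b:ℤ) : LaurentPolynomial (ZMod p)) :=
  ResP.add resP_one (resP_T (by simp))

lemma resP_psi (c : LaurentPolynomial (ZMod p)) : ResP p b 0 (psi p b c) := by
  intro k hk
  rw [psi_apply, AddMonoidAlgebra.coeff_ofCoeff] at hk
  classical
  obtain ⟨z, _, rfl⟩ := Finset.mem_image.mp (Finsupp.mapDomain_support hk)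
  exact Int.mul_emod_right _ _

lemma lp_ext {f : LaurentPolynomial (ZMod p)} (h : ∀ k, f.coeff k = 0) : f = 0 :=
  AddMonoidAlgebra.coeff_injective (Finsupp.ext h)

lemma lp_add_apply (f g : LaurentPolynomial (ZMod p)) (k : ℤ) :
    (f + g).coeff k = f.coeff k + g.coeff k := Finsupp.add_apply f.coeff g.coeff k

lemma T_coeff_same (m : ℤ) : (T m : LaurentPolynomial (ZMod p)).coeff m = 1 :=
  Finsupp.single_eq_same

lemma T_coeff_ne {m k : ℤ} (h : m ≠ k) : (T m : LaurentPolynomial (ZMod p)).coeff k = 0 :=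
  Finsupp.single_eq_of_ne' h

lemma not_isUnit_one_add_T (p b : ℕ) [Fact p.Prime] (hb : 0 < b) :
    ¬ IsUnit (1 + T (b:ℤ) : LaurentPolynomial (ZMod p)) := by
  intro h
  obtain ⟨g, hg⟩ := h.exists_right_inv
  obtain ⟨m, g', hg'⟩ := LaurentPolynomial.exists_T_pow g
  have key : Polynomial.toLaurent ((1 + Polynomial.X ^ b) * g') =
      Polynomial.toLaurent (Polynomial.X ^ m : Polynomial (ZMod p)) := by
    rw [map_mul, hg', Polynomial.toLaurent_X_pow, map_add, map_one, Polynomial.toLaurent_X_pow,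
      ← mul_assoc, hg, one_mul]
  have key2 := Polynomial.toLaurent_injective key
  have hco : IsCoprime (Polynomial.X ^ m : Polynomial (ZMod p)) (1 + Polynomial.X ^ b) := by
    apply IsCoprime.pow_left
    refine ⟨-Polynomial.X ^ (b - 1), 1, ?_⟩
    have hb1 : b - 1 + 1 = b := Nat.succ_pred_eq_of_pos hb
    rw [one_mul, neg_mul, ← pow_succ, hb1]
    ring
  have hdvd : (1 + Polynomial.X ^ b : Polynomial (ZMod p)) ∣ Polynomial.X ^ m := ⟨g', key2.symm⟩
  have hunit : IsUnit (1 + Polynomial.X ^ b : Polynomial (ZMod p)) :=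
    hco.isUnit_of_dvd' hdvd dvd_rfl
  have hdeg := Polynomial.natDegree_eq_zero_of_isUnit hunit
  rw [add_comm, ← Polynomial.C_1, Polynomial.natDegree_X_pow_add_C] at hdeg
  omega

lemma onePlusTb_ne_zero (p b : ℕ) [Fact p.Prime] (hb : 0 < b) :
    (1 + T (b:ℤ) : LaurentPolynomial (ZMod p)) ≠ 0 := by
  intro h
  have h' : (Finsupp.single (0:ℤ) (1:ZMod p)) + Finsupp.single ((b:ℤ)) 1 = (0 : ℤ →₀ ZMod p) := congrArg AddMonoidAlgebra.coeff h
  have h0 := DFunLike.congr_fun h' (0 : ℤ)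
  have hbne : (b:ℤ) ≠ 0 := by exact_mod_cast hb.ne'
  rw [Finsupp.add_apply, Finsupp.single_eq_same, Finsupp.single_eq_of_ne' hbne,
    Finsupp.zero_apply, add_zero] at h0
  exact one_ne_zero h0

/-- `WA q j`: elements whose `q`-coordinate has no support in residue class `j`. -/
noncomputable def WA (p n b : ℕ) (q : Fin n) (j : ℤ) :
    Submodule (LaurentPolynomial (ZMod p)) (MB p n b) where
  carrier := {u | KillP p b j (fromMB p n b u q)}
  zero_mem' := by
    show KillP p b j (fromMB p n b 0 q)
    rw [fromMB_zero]
    exact KillP.zero j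
  add_mem' := by
    intro u v hu hv
    show KillP p b j (fromMB p n b (u + v) q)
    rw [fromMB_add]
    exact KillP.add hu hv
  smul_mem' := by
    intro c u hu
    show KillP p b j (fromMB p n b (c • u) q)
    rw [fromMB_smul]
    have : (psi p b c • fromMB p n b u) q = psi p b c * fromMB p n b u q := rfl
    rw [this]
    exact killP_mul_left (resP_psi c) hu

/-- `WB q i`: elements whose `q`-coordinate residue-`i` part lies in `(1+T^b)·ψ(R)·T^i`. -/
noncomputable def WB (p n b : ℕ) (q : Fin n) (i : ℤ) :
    Submodule (LaurentPolynomial (ZMod p)) (MB p n b) where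
  carrier := {u | ∃ c : LaurentPolynomial (ZMod p),
    KillP p b i (fromMB p n b u q - (1 + T (b:ℤ)) * psi p b c * T i)}
  zero_mem' := by
    refine ⟨0, ?_⟩
    rw [fromMB_zero, map_zero]
    simpa using KillP.zero i
  add_mem' := by
    rintro u v ⟨c1, h1⟩ ⟨c2, h2⟩
    refine ⟨c1 + c2, ?_⟩
    have : fromMB p n b (u + v) q - (1 + T (b:ℤ)) * psi p b (c1 + c2) * T i =
        (fromMB p n b u q - (1 + T (b:ℤ)) * psi p b c1 * T i) +
        (fromMB p n b v q - (1 + T (b:ℤ)) * psi p b c2 * T i) := by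
      rw [fromMB_add, map_add]
      show (fromMB p n b u q + fromMB p n b v q) - _ = _
      ring
    rw [this]
    exact KillP.add h1 h2
  smul_mem' := by
    rintro c u ⟨c0, h⟩
    refine ⟨c * c0, ?_⟩
    have : fromMB p n b (c • u) q - (1 + T (b:ℤ)) * psi p b (c * c0) * T i =
        psi p b c * (fromMB p n b u q - (1 + T (b:ℤ)) * psi p b c0 * T i) := by
      rw [fromMB_smul, map_mul]
      show psi p b c * fromMB p n b u q - _ = _
      ring
    rw [this]
    exact killP_mul_left (resP_psi c) h

/-- the scalar part of a generator -/
noncomputable def wp (p b r : ℕ) (j : ℕ) : LaurentPolynomial (ZMod p) :=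
  (if j = r - 1 then 1 + T (b:ℤ) else 1) * T ((j % b : ℕ) : ℤ)

lemma resP_wp (p b r : ℕ) (hb : 0 < b) (j : ℕ) :
    ResP p b ((j % b : ℕ) : ℤ) (wp p b r j) := by
  have hT : ResP p b ((j % b : ℕ) : ℤ) (T ((j % b : ℕ) : ℤ)) :=
    resP_T (Int.emod_eq_of_lt (by positivity) (by exact_mod_cast Nat.mod_lt _ hb))
  rw [wp]
  split
  · exact resP_mul0 resP_onePlusTb hT
  · exact resP_mul0 resP_one hT

lemma wp_ne_zero (p b r : ℕ) [Fact p.Prime] (hb : 0 < b) (j : ℕ) :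
    wp p b r j ≠ 0 := by
  haveI : Nontrivial (ZMod p) := ZMod.nontrivial_iff.mpr (Fact.out : p.Prime).ne_one
  rw [wp]
  refine mul_ne_zero ?_ ((isUnit_T _).ne_zero)
  split
  · exact onePlusTb_ne_zero p b hb
  · exact one_ne_zero

/-- the generators -/
noncomputable def genF (p n b r : ℕ) (hb : 0 < b) (hrnb : r ≤ n * b) (j : Fin r) :
    Fin n → LaurentPolynomial (ZMod p) :=
  Pi.single ⟨(j:ℕ)/b, (Nat.div_lt_iff_lt_mul hb).mpr (lt_of_lt_of_le j.2 hrnb)⟩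
    (wp p b r (j:ℕ))

lemma genF_apply_eq (p n b r : ℕ) (hb : 0 < b) (hrnb : r ≤ n * b) (j : Fin r) (m : Fin n)
    (h : (m : ℕ) = (j:ℕ)/b) : genF p n b r hb hrnb j m = wp p b r (j:ℕ) := by
  rw [genF]
  have hm : m = ⟨(j:ℕ)/b, (Nat.div_lt_iff_lt_mul hb).mpr (lt_of_lt_of_le j.2 hrnb)⟩ :=
    Fin.ext h
  rw [hm, Pi.single_eq_same]

lemma genF_apply_ne (p n b r : ℕ) (hb : 0 < b) (hrnb : r ≤ n * b) (j : Fin r) (m : Fin n)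
    (h : (m : ℕ) ≠ (j:ℕ)/b) : genF p n b r hb hrnb j m = 0 := by
  rw [genF]
  exact Pi.single_eq_of_ne (fun hh => h (congrArg Fin.val hh)) _

noncomputable abbrev U0F (p n b r : ℕ) (hb : 0 < b) (hrnb : r ≤ n * b) :
    Submodule (LaurentPolynomial (ZMod p)) (MB p n b) :=
  Submodule.span (LaurentPolynomial (ZMod p))
    (Set.range fun j => toMB p n b (genF p n b r hb hrnb j))

noncomputable def UF (p n b r : ℕ) (hb : 0 < b) (hrnb : r ≤ n * b) :
    AddSubgroup (Fin n → LaurentPolynomial (ZMod p)) where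
  carrier := {u | toMB p n b u ∈ U0F p n b r hb hrnb}
  zero_mem' := by
    show toMB p n b 0 ∈ U0F p n b r hb hrnb
    exact Submodule.zero_mem _
  add_mem' := by
    intro x y h1 h2
    show toMB p n b (x + y) ∈ U0F p n b r hb hrnb
    exact Submodule.add_mem _ h1 h2
  neg_mem' := by
    intro x h
    show toMB p n b (-x) ∈ U0F p n b r hb hrnb
    exact Submodule.neg_mem _ h

lemma mem_UF (p n b r : ℕ) (hb : 0 < b) (hrnb : r ≤ n * b)
    (u : Fin n → LaurentPolynomial (ZMod p)) :
    u ∈ UF p n b r hb hrnb ↔ toMB p n b u ∈ U0F p n b r hb hrnb := ⟨fun h => h, fun h => h⟩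

end Stmt12Aux

open Stmt12Aux

/-- For `p` prime and integers `b > 0`, `n > 0`, `0 < r ≤ nb` there exists an
additive subgroup `U ⊆ R^n` with `e(U) = b` (i.e. `b` is the least positive integer
with `x^b U = U`) and `rk_b(U) = r`. -/
theorem stmt12 (p n b r : ℕ) [Fact p.Prime]
    (hb : 0 < b) (hn : 0 < n) (hr : 0 < r) (hrnb : r ≤ n * b) :
    ∃ U : AddSubgroup (Fin n → LaurentPolynomial (ZMod p)),
      U.map (xpow p n b) = U ∧
      (∀ e' : ℕ, 0 < e' → U.map (xpow p n e') = U → b ≤ e') ∧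
      rkm p n b U = r := by
  classical
  haveI : Nontrivial (ZMod p) := ZMod.nontrivial_iff.mpr (Fact.out : p.Prime).ne_one
  refine ⟨UF p n b r hb hrnb, ?_, ?_, ?_⟩
  · -- x^b U = U
    ext u
    simp only [AddSubgroup.mem_map]
    constructor
    · rintro ⟨w, hw, rfl⟩
      have hw' : toMB p n b w ∈ U0F p n b r hb hrnb := (mem_UF p n b r hb hrnb w).mp hw
      rw [mem_UF]
      have heq : (T (1:ℤ) : LaurentPolynomial (ZMod p)) • toMB p n b w
          = toMB p n b (xpow p n b w) := by
        rw [toMB_smul, psi_T]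
        norm_num
        rfl
      rw [← heq]
      exact Submodule.smul_mem _ _ hw'
    · intro hu
      have hu' : toMB p n b u ∈ U0F p n b r hb hrnb := (mem_UF p n b r hb hrnb u).mp hu
      refine ⟨(T (-(b:ℤ)) : LaurentPolynomial (ZMod p)) • u, ?_, ?_⟩
      · rw [mem_UF]
        have heq : (T (-1:ℤ) : LaurentPolynomial (ZMod p)) • toMB p n b u
            = toMB p n b ((T (-(b:ℤ)) : LaurentPolynomial (ZMod p)) • u) := by
          rw [toMB_smul, psi_T]
          norm_num
        rw [← heq]
        exact Submodule.smul_mem _ _ hu'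
      · show (T ((b:ℕ):ℤ) : LaurentPolynomial (ZMod p)) • ((T (-(b:ℤ)) : LaurentPolynomial (ZMod p)) • u) = u
        rw [smul_smul, ← T_add, add_neg_cancel, T_zero, one_smul]
  · -- minimality of b
    intro e' he' hmape'
    by_contra hlt
    push_neg at hlt
    have hsub : ∀ u, u ∈ UF p n b r hb hrnb →
        toMB p n b ((T ((e':ℕ):ℤ) : LaurentPolynomial (ZMod p)) • u) ∈ U0F p n b r hb hrnb := by
      intro u hu
      have h1 : xpow p n e' u ∈ (UF p n b r hb hrnb).map (xpow p n e') :=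
        AddSubgroup.mem_map_of_mem _ hu
      rw [hmape'] at h1
      exact (mem_UF p n b r hb hrnb _).mp h1
    have hqn : (r-1)/b < n :=
      (Nat.div_lt_iff_lt_mul hb).mpr (lt_of_lt_of_le (Nat.sub_lt hr Nat.one_pos) hrnb)
    have hib : (r-1) % b < b := Nat.mod_lt _ hb
    have hr1 : b * ((r-1)/b) + (r-1) % b = r - 1 := Nat.div_add_mod _ _
    have hgmem : ∀ jj : Fin r, genF p n b r hb hrnb jj ∈ UF p n b r hb hrnb :=
      fun jj => (mem_UF p n b r hb hrnb _).mpr (Submodule.subset_span ⟨jj, rfl⟩)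
    -- value of a coordinate-q generator hit by T^{e'}
    have hvalgen : ∀ jj : Fin r, (jj:ℕ)/b = (r-1)/b →
        fromMB p n b (toMB p n b ((T ((e':ℕ):ℤ) : LaurentPolynomial (ZMod p)) •
          genF p n b r hb hrnb jj)) ⟨(r-1)/b, hqn⟩
        = T ((e':ℕ):ℤ) * wp p b r (jj:ℕ) := by
      intro jj hjj
      rw [fromMB_toMB]
      show (T ((e':ℕ):ℤ) : LaurentPolynomial (ZMod p)) * (genF p n b r hb hrnb jj ⟨(r-1)/b, hqn⟩) = _
      rw [genF_apply_eq p n b r hb hrnb jj _ hjj.symm]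
    rcases le_or_gt e' ((r-1) % b) with hcase | hcase
    · -- Case 1 : e' ≤ i ; use WB
      have hUW : U0F p n b r hb hrnb ≤ WB p n b ⟨(r-1)/b, hqn⟩ (((r-1)%b : ℕ) : ℤ) := by
        apply Submodule.span_le.mpr
        rintro _ ⟨jj, rfl⟩
        by_cases hcf : (jj:ℕ)/b = (r-1)/b
        · by_cases hlast : (jj:ℕ) = r - 1
          · refine ⟨1, ?_⟩
            rw [fromMB_toMB, genF_apply_eq p n b r hb hrnb jj _ hcf.symm, map_one, mul_one,
              wp, if_pos hlast, hlast, sub_self]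
            exact KillP.zero _
          · refine ⟨0, ?_⟩
            rw [fromMB_toMB, genF_apply_eq p n b r hb hrnb jj _ hcf.symm, map_zero, mul_zero,
              zero_mul, sub_zero]
            have e1 : b * ((jj:ℕ)/b) + (jj:ℕ)%b = (jj:ℕ) := Nat.div_add_mod _ _
            have hj2 : (jj:ℕ) < r := jj.2
            have e2 : b * ((r-1)/b) + (r-1)%b = r - 1 := Nat.div_add_mod _ _
            rw [hcf] at e1
            have hmod : (jj:ℕ) % b ≠ (r-1) % b := by omega
            exact (resP_wp p b r hb _).killP (by exact_mod_cast hmod)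
        · refine ⟨0, ?_⟩
          rw [fromMB_toMB, genF_apply_ne p n b r hb hrnb jj _ (fun hh => hcf hh.symm),
            map_zero, mul_zero, zero_mul, sub_zero]
          exact KillP.zero _
      have hidx : r - 1 - e' < r := by omega
      have hmem := hUW (hsub _ (hgmem ⟨r - 1 - e', hidx⟩))
      have hsmall : (r-1)%b - e' < b := by omega
      have hdiveq : (r - 1 - e') / b = (r-1)/b := by
        have h2 : r - 1 - e' = b * ((r-1)/b) + ((r-1)%b - e') := by omega
        have h3 : ((r-1)%b - e') / b = 0 := Nat.div_eq_of_lt hsmall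
        rw [h2, Nat.mul_add_div hb, h3, add_zero]
      have hmodeq : (r - 1 - e') % b = (r-1)%b - e' := by
        have h2 : r - 1 - e' = b * ((r-1)/b) + ((r-1)%b - e') := by omega
        have h3 : ((r-1)%b - e') % b = (r-1)%b - e' := Nat.mod_eq_of_lt hsmall
        rw [h2, Nat.mul_add_mod, h3]
      have hval := hvalgen ⟨r - 1 - e', hidx⟩ hdiveq
      rw [wp] at hval
      rw [if_neg (by show r - 1 - e' ≠ r - 1; omega)] at hval
      rw [one_mul, ← T_add] at hval
      have hexp : ((e':ℕ):ℤ) + (((r - 1 - e') % b : ℕ) : ℤ) = (((r-1)%b : ℕ) : ℤ) := by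
        rw [hmodeq]
        push_cast [Nat.cast_sub hcase]
        ring
      rw [hexp] at hval
      have hmem2 : ∃ c : LaurentPolynomial (ZMod p),
          KillP p b (((r-1)%b : ℕ) : ℤ)
            (fromMB p n b (toMB p n b ((T ((e':ℕ):ℤ) : LaurentPolynomial (ZMod p)) •
              genF p n b r hb hrnb ⟨r - 1 - e', hidx⟩)) ⟨(r-1)/b, hqn⟩
              - (1 + T (b:ℤ)) * psi p b c * T (((r-1)%b : ℕ) : ℤ)) := hmem
      obtain ⟨c, hkill⟩ := hmem2
      rw [hval] at hkill
      have hres : ResP p b (((r-1)%b : ℕ) : ℤ)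
          ((T (((r-1)%b : ℕ) : ℤ) : LaurentPolynomial (ZMod p))
            - (1 + T (b:ℤ)) * psi p b c * T (((r-1)%b : ℕ) : ℤ)) := by
        have hfac : (T (((r-1)%b : ℕ) : ℤ) : LaurentPolynomial (ZMod p))
            - (1 + T (b:ℤ)) * psi p b c * T (((r-1)%b : ℕ) : ℤ)
            = (1 - (1 + T (b:ℤ)) * psi p b c) * T (((r-1)%b : ℕ) : ℤ) := by ring
        rw [hfac]
        exact resP_mul0 (ResP.sub resP_one (resP_mul0 resP_onePlusTb (resP_psi c)))
          (resP_T (Int.emod_eq_of_lt (by positivity) (by exact_mod_cast hib)))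
      have hzero := eq_zero_of_resP_killP hres hkill
      have hfac2 : ((1:LaurentPolynomial (ZMod p)) - (1 + T (b:ℤ)) * psi p b c)
          * T (((r-1)%b : ℕ) : ℤ) = 0 := by
        rw [← hzero]; ring
      have h2 : ((1:LaurentPolynomial (ZMod p)) - (1 + T (b:ℤ)) * psi p b c) = 0 := by
        rcases mul_eq_zero.mp hfac2 with h | h
        · exact h
        · exact absurd h (isUnit_T _).ne_zero
      exact not_isUnit_one_add_T p b hb
        (IsUnit.of_mul_eq_one _ (sub_eq_zero.mp h2).symm)
    · -- e' > i
      have hUWA : ∀ jval : ℤ, (((r-1)%b : ℕ) : ℤ) < jval →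
          U0F p n b r hb hrnb ≤ WA p n b ⟨(r-1)/b, hqn⟩ jval := by
        intro jval hjval
        apply Submodule.span_le.mpr
        rintro _ ⟨jj, rfl⟩
        by_cases hcf : (jj:ℕ)/b = (r-1)/b
        · show KillP p b jval (fromMB p n b _ _)
          rw [fromMB_toMB, genF_apply_eq p n b r hb hrnb jj _ hcf.symm]
          have e1 : b * ((jj:ℕ)/b) + (jj:ℕ)%b = (jj:ℕ) := Nat.div_add_mod _ _
          have hj2 : (jj:ℕ) < r := jj.2
          have e2 : b * ((r-1)/b) + (r-1)%b = r - 1 := Nat.div_add_mod _ _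
          rw [hcf] at e1
          have hle : (jj:ℕ)%b ≤ (r-1)%b := by omega
          refine (resP_wp p b r hb _).killP ?_
          have : (((jj:ℕ)%b : ℕ) : ℤ) ≤ (((r-1)%b : ℕ) : ℤ) := by exact_mod_cast hle
          omega
        · show KillP p b jval (fromMB p n b _ _)
          rw [fromMB_toMB, genF_apply_ne p n b r hb hrnb jj _ (fun hh => hcf hh.symm)]
          exact KillP.zero _
      rcases lt_or_ge ((r-1)%b + e') b with hcase2 | hcase2
      · -- Case 2 : i + e' < b ; element = last generator
        have hidx : r - 1 < r := by omega
        have hjval : (((r-1)%b : ℕ) : ℤ) < ((r-1)%b : ℕ) + (e':ℕ) := by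
          push_cast; omega
        have hmem := hUWA (((r-1)%b : ℕ) + (e':ℕ) : ℤ) (by push_cast; omega)
          (hsub _ (hgmem ⟨r - 1, hidx⟩))
        have hval := hvalgen ⟨r - 1, hidx⟩ rfl
        rw [wp, if_pos rfl] at hval
        have hval2 : fromMB p n b (toMB p n b ((T ((e':ℕ):ℤ) : LaurentPolynomial (ZMod p)) •
            genF p n b r hb hrnb ⟨r - 1, hidx⟩)) ⟨(r-1)/b, hqn⟩
            = (1 + T (b:ℤ)) * T ((((r-1)%b : ℕ) : ℤ) + (e':ℕ)) := by
          rw [hval, T_add]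
          ring
        have hkill : KillP p b ((((r-1)%b : ℕ) : ℤ) + (e':ℕ))
            ((1 + T (b:ℤ)) * T ((((r-1)%b : ℕ) : ℤ) + (e':ℕ))) := by
          have hthis : KillP p b ((((r-1)%b : ℕ) : ℤ) + (e':ℕ))
              (fromMB p n b (toMB p n b ((T ((e':ℕ):ℤ) : LaurentPolynomial (ZMod p)) •
                genF p n b r hb hrnb ⟨r - 1, hidx⟩)) ⟨(r-1)/b, hqn⟩) := hmem
          rw [hval2] at hthis
          exact hthis
        have hsup : ((((r-1)%b : ℕ) : ℤ) + (e':ℕ)) ∈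
            ((1 + T (b:ℤ)) * T ((((r-1)%b : ℕ) : ℤ) + (e':ℕ)) :
              LaurentPolynomial (ZMod p)).coeff.support := by
          have hrw : ((1 + T (b:ℤ)) * T ((((r-1)%b : ℕ) : ℤ) + (e':ℕ))
                : LaurentPolynomial (ZMod p))
              = T ((((r-1)%b : ℕ) : ℤ) + (e':ℕ))
                + T ((b:ℤ) + ((((r-1)%b : ℕ) : ℤ) + (e':ℕ))) := by
            rw [add_mul, one_mul, ← T_add]
          rw [hrw, Finsupp.mem_support_iff, lp_add_apply, T_coeff_same,
            T_coeff_ne (by omega), add_zero]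
          exact one_ne_zero
        exact hkill _ hsup (Int.emod_eq_of_lt (by positivity) (by push_cast; omega))
      · -- Case 3 : i + e' ≥ b ; element = generator with residue 0
        have hipos : 0 < (r-1)%b := by omega
        have hidx : r - 1 - (r-1)%b < r := by omega
        have hdiveq : (r - 1 - (r-1)%b) / b = (r-1)/b := by
          have h2 : r - 1 - (r-1)%b = b * ((r-1)/b) := by omega
          rw [h2, Nat.mul_div_cancel_left _ hb]
        have hmodeq : (r - 1 - (r-1)%b) % b = 0 := by
          have h2 : r - 1 - (r-1)%b = b * ((r-1)/b) := by omega
          rw [h2, Nat.mul_mod_right]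
        have hmem := hUWA ((e':ℕ) : ℤ) (by exact_mod_cast hcase)
          (hsub _ (hgmem ⟨r - 1 - (r-1)%b, hidx⟩))
        have hval := hvalgen ⟨r - 1 - (r-1)%b, hidx⟩ hdiveq
        rw [wp] at hval
        rw [if_neg (by show r - 1 - (r-1)%b ≠ r - 1; omega)] at hval
        rw [one_mul, ← T_add] at hval
        have hexp : ((e':ℕ):ℤ) + (((r - 1 - (r-1)%b) % b : ℕ) : ℤ) = ((e':ℕ):ℤ) := by
          rw [hmodeq]; push_cast; ring
        rw [hexp] at hval
        have hkill : KillP p b ((e':ℕ):ℤ) (T ((e':ℕ):ℤ)) := by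
          have hthis : KillP p b ((e':ℕ):ℤ)
              (fromMB p n b (toMB p n b ((T ((e':ℕ):ℤ) : LaurentPolynomial (ZMod p)) •
                genF p n b r hb hrnb ⟨r - 1 - (r-1)%b, hidx⟩)) ⟨(r-1)/b, hqn⟩) := hmem
          rw [hval] at hthis
          exact hthis
        have hsup : ((e':ℕ):ℤ) ∈ (T ((e':ℕ):ℤ) : LaurentPolynomial (ZMod p)).coeff.support := by
          rw [Finsupp.mem_support_iff, T_coeff_same]
          exact one_ne_zero
        exact hkill _ hsup (Int.emod_eq_of_lt (by positivity) (by exact_mod_cast hlt))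
  · -- rank computation
    have hindep : ∀ c : Fin r → LaurentPolynomial (ZMod p),
        (∑ j, psi p b (c j) • genF p n b r hb hrnb j) = 0 → c = 0 := by
      intro c hc
      funext j0
      have hF : ∀ j : Fin r, ResP p b (((j:ℕ) % b : ℕ) : ℤ)
          (psi p b (c j) * wp p b r (j:ℕ)) :=
        fun j => resP_mul0 (resP_psi _) (resP_wp p b r hb _)
      have hcoord : ((⟨(j0:ℕ)/b, (Nat.div_lt_iff_lt_mul hb).mpr
          (lt_of_lt_of_le j0.2 hrnb)⟩ : Fin n) : ℕ) = (j0:ℕ)/b := rfl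
      have key : psi p b (c j0) * wp p b r (j0:ℕ) = 0 := by
        apply lp_ext
        intro k
        by_cases hk : k % (b:ℤ) = (((j0:ℕ) % b : ℕ) : ℤ)
        · have h1 := congrFun hc (⟨(j0:ℕ)/b, (Nat.div_lt_iff_lt_mul hb).mpr
            (lt_of_lt_of_le j0.2 hrnb)⟩ : Fin n)
          rw [Finset.sum_apply] at h1
          have h2 : ∀ j : Fin r, (psi p b (c j) • genF p n b r hb hrnb j)
              (⟨(j0:ℕ)/b, (Nat.div_lt_iff_lt_mul hb).mpr (lt_of_lt_of_le j0.2 hrnb)⟩ : Fin n)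
              = psi p b (c j) * (genF p n b r hb hrnb j
                (⟨(j0:ℕ)/b, (Nat.div_lt_iff_lt_mul hb).mpr (lt_of_lt_of_le j0.2 hrnb)⟩ : Fin n)) :=
            fun j => rfl
          simp only [h2] at h1
          have h3 : (∑ j : Fin r, psi p b (c j) * (genF p n b r hb hrnb j
              (⟨(j0:ℕ)/b, (Nat.div_lt_iff_lt_mul hb).mpr (lt_of_lt_of_le j0.2 hrnb)⟩ : Fin n))).coeff k
              = (0 : ZMod p) := by
            rw [h1]
            rfl
          rw [AddMonoidAlgebra.coeff_sum, Finsupp.finset_sum_apply] at h3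
          rw [Finset.sum_eq_single j0] at h3
          · rw [genF_apply_eq p n b r hb hrnb j0 _ hcoord] at h3
            exact h3
          · intro j _ hj
            by_cases hcf : (j:ℕ)/b = (j0:ℕ)/b
            · rw [genF_apply_eq p n b r hb hrnb j _ (hcoord.trans hcf.symm)]
              have hmodne : (j:ℕ)%b ≠ (j0:ℕ)%b := by
                intro hh
                apply hj
                apply Fin.ext
                have ej := Nat.div_add_mod (j:ℕ) b
                have ej0 := Nat.div_add_mod (j0:ℕ) b
                rw [hcf] at ej
                omega
              by_contra hnz
              have hksupp : k ∈ (psi p b (c j) * wp p b r (j:ℕ)).coeff.support :=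
                Finsupp.mem_support_iff.mpr hnz
              have := (hF j k hksupp).symm.trans hk
              exact hmodne (by exact_mod_cast this)
            · rw [genF_apply_ne p n b r hb hrnb j _ (fun hh => hcf (hcoord.symm.trans hh).symm),
                mul_zero]
              rfl
          · intro hj0
            exact absurd (Finset.mem_univ j0) hj0
        · by_contra hnz
          exact hk (hF j0 k (Finsupp.mem_support_iff.mpr hnz))
      rcases mul_eq_zero.mp key with h | h
      · exact psi_injective p b hb (h.trans (map_zero (psi p b)).symm)
      · exact absurd h (wp_ne_zero p b r hb _)
    have hub : ∀ d ∈ {d : ℕ | ∃ v : Fin d → (Fin n → LaurentPolynomial (ZMod p)),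
        (∀ i, v i ∈ UF p n b r hb hrnb) ∧ ∀ c : Fin d → LaurentPolynomial (ZMod p),
        (∑ i, (psi p b) (c i) • v i) = 0 → c = 0}, d ≤ r := by
      rintro d ⟨v, hvmem, hind⟩
      have li0 : LinearIndependent (LaurentPolynomial (ZMod p))
          (fun j : Fin d => toMB p n b (v j)) := by
        rw [Fintype.linearIndependent_iff]
        intro cc hcc j
        have h0 : (∑ jj, psi p b (cc jj) • v jj) = 0 := hcc
        exact congrFun (hind cc h0) j
      have li : LinearIndependent (LaurentPolynomial (ZMod p))
          (fun j : Fin d => (⟨toMB p n b (v j), (mem_UF p n b r hb hrnb (v j)).mp (hvmem j)⟩ :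
            U0F p n b r hb hrnb)) :=
        LinearIndependent.of_comp (U0F p n b r hb hrnb).subtype (by exact li0)
      have h1 := li.cardinal_le_rank
      have h2 : Module.rank (LaurentPolynomial (ZMod p)) (U0F p n b r hb hrnb) ≤ r := by
        refine le_trans (rank_span_le _) (le_trans Cardinal.mk_range_le ?_)
        simp
      have h3 : (d : Cardinal.{0}) ≤ (r : Cardinal.{0}) := by
        have h4 := le_trans h1 h2
        simpa using h4
      exact_mod_cast h3
    have hmem_r : r ∈ {d : ℕ | ∃ v : Fin d → (Fin n → LaurentPolynomial (ZMod p)),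
        (∀ i, v i ∈ UF p n b r hb hrnb) ∧ ∀ c : Fin d → LaurentPolynomial (ZMod p),
        (∑ i, (psi p b) (c i) • v i) = 0 → c = 0} :=
      ⟨genF p n b r hb hrnb,
        fun jj => (mem_UF p n b r hb hrnb _).mpr (Submodule.subset_span ⟨jj, rfl⟩), hindep⟩
    have hne : {d : ℕ | ∃ v : Fin d → (Fin n → LaurentPolynomial (ZMod p)),
        (∀ i, v i ∈ UF p n b r hb hrnb) ∧ ∀ c : Fin d → LaurentPolynomial (ZMod p),
        (∑ i, (psi p b) (c i) • v i) = 0 → c = 0}.Nonempty := ⟨r, hmem_r⟩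
    show sSup _ = r
    exact le_antisymm (csSup_le hne hub) (le_csSup ⟨r, hub⟩ hmem_r)
end

section
/- Consider the partially ordered-type structure Q' on ℕ_{≥1} × ℕ with the transitive relation (a, b) < (a', b') iff a divides a' and b < b'. Let Q'_0 be the set of minimal elements of Q', and inductively Q'_{α+1} the union of Q'_α with the minimal elements of Q' \ Q'_α (with unions at limit stages). Then the Cantor-Bendixson rank of Q' — the least ordinal α with Q' \ Q'_α = Q' \ Q'_{α+1} — equals ω, the first infinite ordinal. -/
/-- For a set `P` with a relation `r`, `derivSeq r α` is the complement `P \ P_α` of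
the iterated set of minimal elements: `P_0` = minimal elements of `P`,
`P_{α+1} = P_α ∪ {minimal elements of P \ P_α}`, unions at limit stages. Thus
`derivSeq r 0 = {p | ∃ q, r q p}` (the non-minimal elements), at successors we remove
the minimal elements of the remaining set, and at limits we take intersections. -/
noncomputable def derivSeq {P : Type*} (r : P → P → Prop) (o : Ordinal) : Set P :=
  Ordinal.limitRecOn o {p | ∃ q, r q p}
    (fun _ s => {p ∈ s | ∃ q ∈ s, r q p})
    (fun o _ ih => ⋂ (o' : Ordinal) (h : o' < o), ih o' h)

/-- The Cantor–Bendixson rank of `(P, r)`: the least ordinal `α` with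
`P \ P_α = P \ P_{α+1}`. -/
noncomputable def rCB {P : Type*} (r : P → P → Prop) : Ordinal :=
  sInf {α : Ordinal | derivSeq r α = derivSeq r (α + 1)}

abbrev QQ := {a : ℕ // 1 ≤ a} × ℕ

def RR : QQ → QQ → Prop := fun x y => x.1.1 ∣ y.1.1 ∧ x.2 < y.2

lemma ds_zero {P : Type*} (r : P → P → Prop) :
    derivSeq r 0 = {p | ∃ q, r q p} := by
  rw [derivSeq, Ordinal.limitRecOn_zero]

lemma ds_succ {P : Type*} (r : P → P → Prop) (o : Ordinal) :
    derivSeq r (o + 1) = {p ∈ derivSeq r o | ∃ q ∈ derivSeq r o, r q p} := by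
  rw [derivSeq, Ordinal.add_one_eq_succ, Ordinal.limitRecOn_succ]; rfl

lemma ds_limit {P : Type*} (r : P → P → Prop) {o : Ordinal} (h : Order.IsSuccLimit o) :
    derivSeq r o = ⋂ (o' : Ordinal) (_ : o' < o), derivSeq r o' := by
  rw [derivSeq, Ordinal.limitRecOn_limit _ _ _ _ h]; rfl

lemma ds_nat (n : ℕ) : derivSeq RR (n : Ordinal) = {p : QQ | n + 1 ≤ p.2} := by
  induction n with
  | zero =>
    rw [Nat.cast_zero, ds_zero]
    ext p
    constructor
    · rintro ⟨q, -, hb⟩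
      simp only [Set.mem_setOf_eq]
      omega
    · intro hp
      simp only [Set.mem_setOf_eq] at hp
      exact ⟨(⟨1, le_refl 1⟩, p.2 - 1), one_dvd _, by omega⟩
  | succ n ih =>
    rw [Nat.cast_succ, ds_succ, ih]
    ext p
    constructor
    · rintro ⟨hp, q, hq, -, hlt⟩
      simp only [Set.mem_setOf_eq] at hq ⊢
      omega
    · intro hp
      simp only [Set.mem_setOf_eq] at hp
      refine ⟨by simp only [Set.mem_setOf_eq]; omega,
        (⟨1, le_refl 1⟩, p.2 - 1), by simp only [Set.mem_setOf_eq]; omega,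
        one_dvd _, by omega⟩

lemma ds_omega : derivSeq RR Ordinal.omega0 = ∅ := by
  rw [ds_limit RR Ordinal.isSuccLimit_omega0]
  ext p
  simp only [Set.mem_iInter, Set.mem_empty_iff_false, iff_false]
  intro h
  have := h (p.2 : Ordinal) (Ordinal.nat_lt_omega0 p.2)
  rw [ds_nat] at this
  simp only [Set.mem_setOf_eq] at this
  omega

/-- The Cantor–Bendixson rank of `Q' = ℕ_{≥1} × ℕ` with the transitive relation
`(a,b) < (a',b') ↔ a ∣ a' ∧ b < b'` equals `ω`. -/
theorem stmt13 :
    rCB (fun x y : {a : ℕ // 1 ≤ a} × ℕ => x.1.1 ∣ y.1.1 ∧ x.2 < y.2)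
      = Ordinal.omega0 := by
  show rCB RR = Ordinal.omega0
  apply IsLeast.csInf_eq
  constructor
  · show derivSeq RR _ = derivSeq RR _
    rw [ds_omega, ds_succ, ds_omega]
    simp
  · intro α hα
    by_contra hlt
    push_neg at hlt
    obtain ⟨n, rfl⟩ := Ordinal.lt_omega0.mp hlt
    have h : derivSeq RR n = derivSeq RR (n + 1) := hα
    rw [ds_nat, ← Nat.cast_succ, ds_nat] at h
    have := Set.ext_iff.mp h (⟨1, le_refl 1⟩, n + 1)
    simp only [Set.mem_setOf_eq] at this
    omega
end

section
/- Let p be prime, n ≥ 1, and L = (ℤ/pℤ)^n ≀ ℤ the lamplighter group, with A = ⊕_ℤ (ℤ/pℤ)^n its base subgroup. The set of subgroups V of L whose projection to ℤ is nontrivial (i.e., V ⊄ A) is countable. -/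
/-- The shift automorphism of `⊕_ℤ (ℤ/pℤ)^n` (translation of coordinates by 1). -/
noncomputable def lampShift (p n : ℕ) :
    AddAut (ℤ →₀ (Fin n → ZMod p)) :=
  Finsupp.domCongr (Equiv.addRight (1 : ℤ))

/-- The lamplighter group `(ℤ/pℤ)^n ≀ ℤ = (⊕_ℤ (ℤ/pℤ)^n) ⋊ ℤ`, with `ℤ` acting by
shifting coordinates. -/
noncomputable abbrev Lamp (p n : ℕ) :=
  SemidirectProduct (Multiplicative (ℤ →₀ (Fin n → ZMod p))) (Multiplicative ℤ)
    (zpowersHom (MulAut (Multiplicative (ℤ →₀ (Fin n → ZMod p))))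
      (AddEquiv.toMultiplicative (lampShift p n)))

namespace Stmt16

open SemidirectProduct Finsupp Multiplicative

noncomputable section

variable (p n : ℕ)

abbrev A := ℤ →₀ (Fin n → ZMod p)
abbrev S := LaurentPolynomial (ZMod p)

/-- shift by `z` as a `ZMod p`-linear automorphism. -/
def shiftE (z : ℤ) : A p n ≃ₗ[ZMod p] A p n :=
  Finsupp.domLCongr (Equiv.addRight z)

lemma shiftE_apply (z : ℤ) (a : A p n) :
    shiftE p n z a = Finsupp.equivMapDomain (Equiv.addRight z) a := rfl

lemma shiftE_single (z m : ℤ) (c : Fin n → ZMod p) :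
    shiftE p n z (Finsupp.single m c) = Finsupp.single (m + z) c := by
  rw [shiftE, Finsupp.domLCongr_single]
  rfl

lemma shiftE_add (z w : ℤ) (a : A p n) :
    shiftE p n (z + w) a = shiftE p n z (shiftE p n w a) := by
  rw [shiftE_apply, shiftE_apply, shiftE_apply,
    show (Equiv.addRight (z + w)) = (Equiv.addRight w).trans (Equiv.addRight z) by
      ext x; simp [add_assoc, add_comm z w],
    Finsupp.equivMapDomain_trans]

/-- the shift hom with step `s`: `z ↦ shift by z * s`. -/
def shiftHomS (s : ℤ) : Multiplicative ℤ →* (A p n ≃ₗ[ZMod p] A p n) where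
  toFun z := shiftE p n (toAdd z * s)
  map_one' := by
    apply LinearEquiv.ext
    intro a
    show shiftE p n (toAdd (1 : Multiplicative ℤ) * s) a = a
    rw [show toAdd (1 : Multiplicative ℤ) * s = 0 by simp, shiftE_apply]
    ext k
    simp
    rfl
  map_mul' x y := by
    apply LinearEquiv.ext
    intro a
    show shiftE p n (toAdd (x * y) * s) a
        = (shiftE p n (toAdd x * s) * shiftE p n (toAdd y * s)) a
    rw [show (shiftE p n (toAdd x * s) * shiftE p n (toAdd y * s)) a
        = shiftE p n (toAdd x * s) (shiftE p n (toAdd y * s) a) from rfl,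
      toAdd_mul, add_mul, shiftE_add]

/-- The representation of `(ZMod p)[T;T⁻¹]` on `A` where `T` acts by shift by `s`. -/
def algRep (s : ℤ) : S p →ₐ[ZMod p] Module.End (ZMod p) (A p n) :=
  AddMonoidAlgebra.lift (ZMod p) _ ℤ
    ((LinearEquiv.automorphismGroup.toLinearMapMonoidHom).comp (shiftHomS p n s))

lemma algRep_single (s k : ℤ) (u : ZMod p) (a : A p n) :
    algRep p n s (AddMonoidAlgebra.single k u) a = u • (shiftE p n (k * s) a) := by
  rw [algRep, AddMonoidAlgebra.lift_single]
  simp only [MonoidHom.comp_apply, LinearMap.smul_apply]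
  rfl

/-- The module structure on `A` over Laurent polynomials with `T` acting as shift by `s`. -/
def modS (s : ℤ) : Module (S p) (A p n) :=
  Module.compHom _ (algRep p n s).toRingHom


lemma modS_smul_def (s : ℤ) (c : S p) (a : A p n) :
    (letI := modS p n s; c • a) = algRep p n s c a := rfl

/-- The shift action, as a hom into `MulAut` of the multiplicative base group. -/
def shiftMulAut : Multiplicative ℤ →* MulAut (Multiplicative (A p n)) where
  toFun z := AddEquiv.toMultiplicative (Finsupp.domCongr (Equiv.addRight (toAdd z)))
  map_one' := by
    ext x : 1
    show ofAdd (shiftE p n (toAdd (1 : Multiplicative ℤ)) (toAdd x)) = x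
    rw [show toAdd (1 : Multiplicative ℤ) = 0 from rfl]
    rw [show (shiftE p n 0) (toAdd x) = toAdd x by
      rw [shiftE_apply]; ext k; simp; rfl]
    rfl
  map_mul' z w := by
    ext x : 1
    show ofAdd (shiftE p n (toAdd (z * w)) (toAdd x))
      = ofAdd (shiftE p n (toAdd z) (shiftE p n (toAdd w) (toAdd x)))
    rw [toAdd_mul, shiftE_add]

lemma phi_eq : (zpowersHom (MulAut (Multiplicative (ℤ →₀ (Fin n → ZMod p))))
      (AddEquiv.toMultiplicative (lampShift p n))) = shiftMulAut p n := by
  apply MonoidHom.ext_mint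
  rw [zpowersHom_apply]
  show (AddEquiv.toMultiplicative (lampShift p n)) ^ (1 : ℤ) = _
  rw [zpow_one]
  rfl

lemma conj_inl (t : Lamp p n) (a : A p n) :
    t * inl (ofAdd a) * t⁻¹ = inl (ofAdd (shiftE p n (toAdd (rightHom t)) a)) := by
  have key : inr t.right * inl (ofAdd a) * (inr t.right)⁻¹
      = (inl ((shiftMulAut p n) t.right (ofAdd a)) : Lamp p n) := by
    rw [show ((inr t.right : Lamp p n))⁻¹ = inr t.right⁻¹ from (map_inv inr t.right).symm,
      ← inl_aut]
    exact congrArg inl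
      (congrFun (congrArg (fun F : Multiplicative ℤ →* MulAut (Multiplicative (A p n)) => ⇑(F t.right)) (phi_eq p n)) (ofAdd a))
  conv_lhs => rw [← inl_left_mul_inr_right t]
  rw [show inl t.left * inr t.right * inl (ofAdd a) * (inl t.left * inr t.right)⁻¹
      = inl t.left * (inr t.right * inl (ofAdd a) * (inr t.right)⁻¹) * (inl t.left)⁻¹ by group]
  rw [key, ← map_inv, ← map_mul, ← map_mul]
  congr 1
  rw [mul_comm t.left, mul_inv_cancel_right]
  rfl

lemma conj_zpow_inl (t : Lamp p n) (s : ℤ) (hts : rightHom t = ofAdd s) (k : ℤ) (a : A p n) :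
    t ^ k * inl (ofAdd a) * (t ^ k)⁻¹ = inl (ofAdd (shiftE p n (k * s) a)) := by
  rw [conj_inl, map_zpow, hts]
  norm_num

/-- subgroup of the base corresponding to a subgroup of `Lamp`. -/
def sub0 (W : Subgroup (Lamp p n)) : AddSubgroup (A p n) :=
  Subgroup.toAddSubgroup' (W.comap inl)

lemma mem_sub0 (W : Subgroup (Lamp p n)) (a : A p n) :
    a ∈ sub0 p n W ↔ inl (ofAdd a) ∈ W := Iff.rfl

lemma smul_mem_sub0 [NeZero p] {s : ℤ} {W : Subgroup (Lamp p n)} {t : Lamp p n} (ht : t ∈ W)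
    (hts : rightHom t = ofAdd s) (c : S p) {a : A p n} (ha : a ∈ sub0 p n W) :
    algRep p n s c a ∈ sub0 p n W := by
  induction c using AddMonoidAlgebra.induction_linear with
  | zero => rw [map_zero]; exact zero_mem _
  | add f g hf hg => rw [map_add]; exact add_mem hf hg
  | single k u =>
      rw [algRep_single]
      have hb : shiftE p n (k * s) a ∈ sub0 p n W := by
        rw [mem_sub0] at ha ⊢
        rw [← conj_zpow_inl p n t s hts k a]
        exact mul_mem (mul_mem (zpow_mem ht k) ha) (inv_mem (zpow_mem ht k))
      obtain ⟨m, rfl⟩ := ZMod.natCast_zmod_surjective (n := p) u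
      rw [Nat.cast_smul_eq_nsmul]
      exact AddSubgroup.nsmul_mem _ hb m

/-- `sub0` as a submodule over the Laurent polynomials acting with step `s`. -/
def sub0Mod [NeZero p] (s : ℤ) (W : Subgroup (Lamp p n)) (t : Lamp p n) (ht : t ∈ W)
    (hts : rightHom t = ofAdd s) : @Submodule (S p) (A p n) _ _ (modS p n s) :=
  letI := modS p n s
  { carrier := sub0 p n W
    add_mem' := fun h1 h2 => add_mem h1 h2
    zero_mem' := zero_mem _
    smul_mem' := fun c a ha => smul_mem_sub0 p n ht hts c ha }

lemma mem_sub0Mod [NeZero p] (s : ℤ) (W : Subgroup (Lamp p n)) (t : Lamp p n) (ht : t ∈ W)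
    (hts : rightHom t = ofAdd s) (a : A p n) :
    a ∈ sub0Mod p n s W t ht hts ↔ inl (ofAdd a) ∈ W := Iff.rfl

lemma fgTop [NeZero p] (s : ℤ) (hs : 0 < s) :
    @Submodule.FG (S p) (A p n) _ _ (modS p n s) ⊤ := by
  letI := modS p n s
  classical
  refine ⟨(Finset.range s.toNat ×ˢ (Finset.univ : Finset (Fin n → ZMod p))).image
    (fun rc : ℕ × (Fin n → ZMod p) => (Finsupp.single (rc.1 : ℤ) rc.2 : A p n)), ?_⟩
  rw [eq_top_iff]
  rintro a -
  have key : ∀ (m : ℤ) (c : Fin n → ZMod p), Finsupp.single m c ∈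
      Submodule.span (S p) ((Finset.image
        (fun rc : ℕ × (Fin n → ZMod p) => (Finsupp.single (rc.1 : ℤ) rc.2 : A p n))
        (Finset.range s.toNat ×ˢ (Finset.univ : Finset (Fin n → ZMod p)))) :
          Set (A p n)) := by
    intro m c
    have h0 : 0 ≤ m % s := Int.emod_nonneg m hs.ne'
    have h1 : m % s < s := Int.emod_lt_of_pos m hs
    have hmem : Finsupp.single (m % s) c ∈ Submodule.span (S p)
        ((Finset.image (fun rc : ℕ × (Fin n → ZMod p) =>
            (Finsupp.single (rc.1 : ℤ) rc.2 : A p n))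
          (Finset.range s.toNat ×ˢ (Finset.univ : Finset (Fin n → ZMod p)))) :
            Set (A p n)) := by
      apply Submodule.subset_span
      have hin : ((m % s).toNat, c) ∈ Finset.range s.toNat ×ˢ
          (Finset.univ : Finset (Fin n → ZMod p)) := by
        rw [Finset.mem_product, Finset.mem_range]
        exact ⟨by omega, Finset.mem_univ _⟩
      have h2 := Finset.mem_image_of_mem
        (fun rc : ℕ × (Fin n → ZMod p) => (Finsupp.single (rc.1 : ℤ) rc.2 : A p n)) hin
      simpa only [Int.toNat_of_nonneg h0, Finset.mem_coe] using h2
    let Tq : S p := AddMonoidAlgebra.single (m / s) (1 : ZMod p)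
    have h2 := Submodule.smul_mem _ Tq hmem
    rw [modS_smul_def, algRep_single, one_smul, shiftE_single, Int.emod_add_ediv_mul] at h2
    exact h2
  induction a using Finsupp.induction with
  | zero => exact zero_mem _
  | single_add m c f _ _ ih => exact add_mem (key m c) ih

instance : Countable (ZMod p) := by
  cases p
  · exact inferInstanceAs (Countable ℤ)
  · exact inferInstanceAs (Countable (Fin _))

instance : Countable (Lamp p n) := by
  have hinj : Function.Injective
      (fun g : Lamp p n => ((toAdd g.left, toAdd g.right) : (A p n) × ℤ)) := by
    intro a b h
    simp only [Prod.mk.injEq] at h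
    exact SemidirectProduct.ext h.1 h.2
  exact hinj.countable

end

end Stmt16

open Stmt16 SemidirectProduct Multiplicative in
/-- For `p` prime and `n ≥ 1`, the set of subgroups `V` of the lamplighter group
`L = (ℤ/pℤ)^n ≀ ℤ` whose projection to `ℤ` is nontrivial (i.e. `V ⊄ A`, the base
group) is countable. -/
theorem stmt16 (p n : ℕ) (hp : p.Prime) (hn : 1 ≤ n) :
    {V : Subgroup (Lamp p n) |
      Subgroup.map SemidirectProduct.rightHom V ≠ ⊥}.Countable := by
  classical
  haveI : Fact p.Prime := ⟨hp⟩
  haveI : NeZero p := ⟨hp.ne_zero⟩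
  haveI hN : IsNoetherianRing (S p) := by
    have h := LaurentPolynomial.isLocalization (R := ZMod p)
    exact @IsLocalization.isNoetherianRing _ _
      (Submonoid.powers (Polynomial.X : Polynomial (ZMod p))) _ _ _ h inferInstance
  have hsub : {V : Subgroup (Lamp p n) | Subgroup.map SemidirectProduct.rightHom V ≠ ⊥}
      ⊆ Set.range (fun F : Finset (Lamp p n) => Subgroup.closure (F : Set (Lamp p n))) := by
    intro V hV
    simp only [Set.mem_setOf_eq] at hV
    set H : Subgroup (Multiplicative ℤ) := Subgroup.map SemidirectProduct.rightHom V with hH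
    obtain ⟨a, ha⟩ := Int.subgroup_cyclic (Subgroup.toAddSubgroup' H)
    have hmemH : ∀ z : ℤ, ofAdd z ∈ H ↔ ∃ k : ℤ, k • a = z := by
      intro z
      rw [← AddSubgroup.mem_closure_singleton, ← ha]
      exact Iff.rfl
    have hane : a ≠ 0 := by
      rintro rfl
      apply hV
      rw [Subgroup.eq_bot_iff_forall]
      intro x hx
      have := (hmemH (toAdd x)).mp (by rwa [ofAdd_toAdd])
      obtain ⟨k, hk⟩ := this
      simp only [smul_zero] at hk
      rw [← ofAdd_toAdd x, ← hk]
      rfl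
    set s : ℤ := |a| with hsdef
    have hs : 0 < s := abs_pos.mpr hane
    have hms : ∀ z : ℤ, ofAdd z ∈ H ↔ ∃ k : ℤ, k * s = z := by
      intro z
      rw [hmemH]
      rcases abs_choice a with h | h
      · constructor
        · rintro ⟨k, rfl⟩; exact ⟨k, by rw [hsdef, h, smul_eq_mul]⟩
        · rintro ⟨k, rfl⟩; exact ⟨k, by rw [smul_eq_mul, hsdef, h]⟩
      · constructor
        · rintro ⟨k, rfl⟩; exact ⟨-k, by rw [hsdef, h, smul_eq_mul]; ring⟩
        · rintro ⟨k, rfl⟩; exact ⟨-k, by rw [smul_eq_mul, hsdef, h]; ring⟩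
    have hsH : ofAdd s ∈ H := (hms s).mpr ⟨1, one_mul s⟩
    obtain ⟨t, htV, hts⟩ := Subgroup.mem_map.mp hsH
    letI := modS p n s
    haveI : Module.Finite (S p) (A p n) := ⟨fgTop p n s hs⟩
    haveI : IsNoetherian (S p) (A p n) := inferInstance
    obtain ⟨F, hF⟩ := IsNoetherian.noetherian (sub0Mod p n s V t htV hts)
    refine ⟨insert t (F.image (fun b => SemidirectProduct.inl (ofAdd b))), ?_⟩
    have htC : t ∈ Subgroup.closure
        ((insert t (F.image (fun b => SemidirectProduct.inl (ofAdd b))) : Finset (Lamp p n)) :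
          Set (Lamp p n)) :=
      Subgroup.subset_closure (by simp)
    apply le_antisymm
    · rw [Subgroup.closure_le]
      intro x hx
      simp only [Finset.coe_insert, Set.mem_insert_iff, Finset.coe_image, Set.mem_image,
        Finset.mem_coe] at hx
      rcases hx with rfl | ⟨b, hbF, rfl⟩
      · exact htV
      · have hb : b ∈ Submodule.span (S p) (↑F : Set (A p n)) := Submodule.subset_span hbF
        rw [hF] at hb
        exact hb
    · intro g hgV
      have hrg : SemidirectProduct.rightHom g ∈ H := ⟨g, hgV, rfl⟩
      obtain ⟨k, hk⟩ := (hms (toAdd (SemidirectProduct.rightHom g))).mp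
        (by rwa [ofAdd_toAdd])
      have hrk : SemidirectProduct.rightHom (t ^ k) = ofAdd (k * s) := by
        rw [map_zpow, hts, ← ofAdd_zsmul, smul_eq_mul]
      have hker : SemidirectProduct.rightHom (g * (t ^ k)⁻¹) = 1 := by
        rw [map_mul, map_inv, hrk, show SemidirectProduct.rightHom g = ofAdd (k * s) by
          rw [← ofAdd_toAdd (SemidirectProduct.rightHom g), hk], mul_inv_cancel]
      obtain ⟨x, hx⟩ : g * (t ^ k)⁻¹ ∈
          (SemidirectProduct.inl : Multiplicative (A p n) →* Lamp p n).range := by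
        rw [range_inl_eq_ker_rightHom]
        exact hker
      have hxV : SemidirectProduct.inl (ofAdd (toAdd x)) ∈ V := by
        rw [ofAdd_toAdd, hx]
        exact mul_mem hgV (inv_mem (zpow_mem htV k))
      have h1 : toAdd x ∈ Submodule.span (S p) (↑F : Set (A p n)) := by
        rw [hF]
        exact hxV
      have h2 : Submodule.span (S p) (↑F : Set (A p n)) ≤
          sub0Mod p n s _ t htC hts := by
        rw [Submodule.span_le]
        intro b hbF
        rw [SetLike.mem_coe, mem_sub0Mod]
        exact Subgroup.subset_closure (by simp only [Finset.coe_insert, Set.mem_insert_iff,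
          Finset.coe_image, Set.mem_image, Finset.mem_coe]; exact Or.inr ⟨b, hbF, rfl⟩)
      have hxC : SemidirectProduct.inl (ofAdd (toAdd x)) ∈ Subgroup.closure
          ((insert t (F.image (fun b => SemidirectProduct.inl (ofAdd b))) : Finset (Lamp p n)) :
            Set (Lamp p n)) := h2 h1
      have hgdec : g = SemidirectProduct.inl (ofAdd (toAdd x)) * t ^ k := by
        rw [ofAdd_toAdd, hx]
        group
      rw [hgdec]
      exact mul_mem hxC (zpow_mem htC k)
  exact Set.Countable.mono hsub (Set.countable_range _)
end

section
/- Let p be prime, n ≥ 1, L = (ℤ/pℤ)^n ≀ ℤ, A = ⊕_ℤ(ℤ/pℤ)^n ≤ L. Suppose V_m → V in Sub(L) where V is a subgroup not contained in A. Then there exists m₀ such that V ⊆ V_m for all m ≥ m₀. -/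
set_option maxHeartbeats 1000000


namespace Stmt17
open Finsupp SemidirectProduct MonoidAlgebra Multiplicative
variable (p n : ℕ)
abbrev A (p n : ℕ) : Type := ℤ →₀ (Fin n → ZMod p)
noncomputable def E (z : ℤ) : A p n ≃+ A p n := Finsupp.domCongr (Equiv.addRight z)
lemma E_add (y z : ℤ) (f : A p n) : E p n (y + z) f = E p n y (E p n z f) := by
  show equivMapDomain _ f = equivMapDomain _ (equivMapDomain _ f)
  rw [← equivMapDomain_trans]; congr 1; ext x; simp [add_assoc, add_comm y z]
lemma E_zero (f : A p n) : E p n 0 f = f := by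
  show equivMapDomain _ f = f
  convert equivMapDomain_refl f using 2; ext x; simp
lemma E_single (z a : ℤ) (m : Fin n → ZMod p) :
    E p n z (Finsupp.single a m) = Finsupp.single (a + z) m := equivMapDomain_single ..
noncomputable def Psi : Multiplicative ℤ →* MulAut (Multiplicative (A p n)) where
  toFun z := AddEquiv.toMultiplicative (E p n z.toAdd)
  map_one' := by ext f : 1; exact congrArg ofAdd (E_zero p n _)
  map_mul' x y := by ext f : 1; exact congrArg ofAdd (E_add p n _ _ _)
lemma phi_eq :
    (zpowersHom (MulAut (Multiplicative (ℤ →₀ (Fin n → ZMod p))))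
      (AddEquiv.toMultiplicative (lampShift p n))) = Psi p n := by
  apply MonoidHom.ext_mint
  rw [zpowersHom_apply]
  simp only [toAdd_ofAdd, zpow_one]
  rfl

lemma conj_inl (g : Lamp p n) (a : A p n) :
    g * inl (ofAdd a) * g⁻¹ = inl (ofAdd (E p n (rightHom g).toAdd a)) := by
  have h1 : inr g.right * inl (ofAdd a) * (inr g.right)⁻¹
      = (inl ((Psi p n) g.right (ofAdd a)) : Lamp p n) := by
    rw [← phi_eq, ← map_inv]
    exact (inl_aut (φ := (zpowersHom (MulAut (Multiplicative (ℤ →₀ (Fin n → ZMod p))))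
      (AddEquiv.toMultiplicative (lampShift p n)))) g.right (ofAdd a)).symm
  have h2 : rightHom g = g.right := rfl
  calc g * inl (ofAdd a) * g⁻¹
      = inl g.left * (inr g.right * inl (ofAdd a) * (inr g.right)⁻¹) * (inl g.left)⁻¹ := by
        conv_lhs => rw [← inl_left_mul_inr_right g]
        group
    _ = inl g.left * inl ((Psi p n) g.right (ofAdd a)) * (inl g.left)⁻¹ := by rw [h1]
    _ = inl (g.left * (Psi p n) g.right (ofAdd a) * g.left⁻¹) := by
        rw [map_mul, map_mul, map_inv]
    _ = inl ((Psi p n) g.right (ofAdd a)) := by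
        rw [mul_comm g.left, mul_inv_cancel_right]
    _ = inl (ofAdd (E p n (rightHom g).toAdd a)) := by rw [h2]; rfl

noncomputable def rho (k : ℤ) : Representation (ZMod p) (Multiplicative ℤ) (A p n) where
  toFun z :=
    { toFun := fun f => E p n (k * z.toAdd) f
      map_add' := fun f g => map_add _ f g
      map_smul' := fun c f => by ext x j; rfl }
  map_one' := by
    apply LinearMap.ext
    intro f
    show E p n (k * toAdd (1 : Multiplicative ℤ)) f = f
    rw [toAdd_one, mul_zero, E_zero]
  map_mul' x y := by
    apply LinearMap.ext
    intro f
    show E p n (k * toAdd (x * y)) f = E p n (k * x.toAdd) (E p n (k * y.toAdd) f)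
    rw [toAdd_mul, mul_add, E_add]

lemma single_smul (k z : ℤ) (c : ZMod p) (x : (rho p n k).asModule) :
    (MonoidAlgebra.single (ofAdd z : Multiplicative ℤ) c) • x
      = c • (E p n (k * z) (x : A p n)) := by
  show (rho p n k).asAlgebraHom (MonoidAlgebra.single (ofAdd z : Multiplicative ℤ) c) x = _
  rw [Representation.asAlgebraHom_single]
  rfl

lemma smul_smul_assoc (k : ℤ) (c : ZMod p) (r : MonoidAlgebra (ZMod p) (Multiplicative ℤ))
    (x : (rho p n k).asModule) : (c • r) • x = c • (r • x) := by
  show (rho p n k).asAlgebraHom (c • r) x = _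
  rw [map_smul]
  rfl

lemma noeth (hp : p.Prime) : IsNoetherianRing (MonoidAlgebra (ZMod p) (Multiplicative ℤ)) := by
  haveI := Fact.mk hp
  haveI : IsNoetherianRing (LaurentPolynomial (ZMod p)) := by
    haveI := LaurentPolynomial.isLocalization (R := ZMod p)
    exact IsLocalization.isNoetherianRing (Submonoid.powers (Polynomial.X : Polynomial (ZMod p)))
      _ inferInstance
  exact isNoetherianRing_of_ringEquiv _ (AddMonoidAlgebra.toMultiplicative (ZMod p) ℤ)

/-- identity cast into the module type synonym -/
def toM (k : ℤ) (a : A p n) : (rho p n k).asModule := a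

lemma toM_add (k : ℤ) (a b : A p n) : toM p n k (a + b) = toM p n k a + toM p n k b := rfl

lemma finiteModule (k : ℤ) (hk : 0 < k) :
    Module.Finite (MonoidAlgebra (ZMod p) (Multiplicative ℤ)) (rho p n k).asModule := by
  classical
  set R := MonoidAlgebra (ZMod p) (Multiplicative ℤ)
  set S : Finset ((rho p n k).asModule) := Finset.image (fun x : Fin k.toNat × Fin n =>
    toM p n k (Finsupp.single ((x.1 : ℕ) : ℤ) (Pi.single x.2 1))) Finset.univ with hS
  refine ⟨⟨S, ?_⟩⟩
  rw [eq_top_iff]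
  rintro a -
  suffices h : ∀ b : A p n, toM p n k b ∈ Submodule.span R ↑S by exact h a
  intro b
  have hsm : ∀ (c : ZMod p) (y : (rho p n k).asModule), y ∈ Submodule.span R ↑S →
      c • y ∈ Submodule.span R ↑S := by
    intro c y hy
    have h := single_smul p n k 0 c y
    rw [mul_zero] at h
    erw [E_zero] at h
    exact h ▸ Submodule.smul_mem _ _ hy
  have key1 : ∀ (r : ℤ), 0 ≤ r → r < k → ∀ m : Fin n → ZMod p,
      toM p n k (Finsupp.single r m) ∈ Submodule.span R ↑S := by
    intro r hr0 hrk m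
    have hrt : ((r.toNat : ℕ) : ℤ) = r := Int.toNat_of_nonneg hr0
    have hrf : r.toNat < k.toNat := by omega
    have hsum : toM p n k (Finsupp.single r m)
        = ∑ j, toM p n k (Finsupp.single r (Pi.single j (m j))) := by
      show (Finsupp.single r m : A p n) = ∑ j, Finsupp.single r (Pi.single j (m j))
      conv_lhs => rw [← Finset.univ_sum_single m]
      exact map_sum (Finsupp.singleAddHom r) _ _
    rw [hsum]
    refine Submodule.sum_mem _ ?_
    intro j _
    have h1 : toM p n k (Finsupp.single r (Pi.single j (m j)))
        = m j • toM p n k (Finsupp.single r (Pi.single j 1)) := by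
      have : (Finsupp.single r (Pi.single j (m j)) : A p n)
          = m j • Finsupp.single r (Pi.single j 1) := by
        rw [Finsupp.smul_single, ← Pi.single_smul, smul_eq_mul, mul_one]
      exact this
    rw [h1]
    refine hsm _ _ (Submodule.subset_span ?_)
    rw [hS]
    simp only [Finset.coe_image, Set.mem_image, Finset.mem_coe]
    exact ⟨(⟨r.toNat, hrf⟩, j), by simp, by rw [hrt]⟩
  induction b using Finsupp.induction with
  | zero => exact Submodule.zero_mem _
  | single_add i m f hif hm ih =>
    rw [toM_add]
    refine Submodule.add_mem _ ?_ ih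
    have h2 : (MonoidAlgebra.single (ofAdd (i / k) : Multiplicative ℤ) (1 : ZMod p)) •
        toM p n k (Finsupp.single (i % k) m)
        = toM p n k (Finsupp.single i m) := by
      rw [single_smul, one_smul]
      show E p n (k * (i / k)) (Finsupp.single (i % k) m) = _
      rw [E_single, Int.emod_add_mul_ediv]
      rfl
    rw [← h2]
    exact Submodule.smul_mem _ _ (key1 _ (Int.emod_nonneg i hk.ne') (Int.emod_lt_of_pos i hk) m)

lemma conj_zpow (t : Lamp p n) (z : ℤ) (a : A p n) :
    t ^ z * inl (ofAdd a) * (t ^ z)⁻¹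
      = inl (ofAdd (E p n ((rightHom t).toAdd * z) a)) := by
  have hx : (rightHom (t ^ z)).toAdd = (rightHom t).toAdd * z := by
    rw [map_zpow, toAdd_zpow, smul_eq_mul, mul_comm]
  rw [conj_inl, hx]

/-- the `V ∩ A` submodule associated to a subgroup containing `t` -/
noncomputable def toSub (U : Subgroup (Lamp p n)) (t : Lamp p n) (htU : t ∈ U) (hp : p ≠ 0) :
    Submodule (MonoidAlgebra (ZMod p) (Multiplicative ℤ))
      (rho p n (rightHom t).toAdd).asModule where
  carrier := {a : (rho p n (rightHom t).toAdd).asModule | (inl (ofAdd (a : A p n)) : Lamp p n) ∈ U}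
  zero_mem' := by
    show (inl (ofAdd (0 : A p n)) : Lamp p n) ∈ U
    rw [ofAdd_zero, map_one]
    exact one_mem U
  add_mem' := by
    intro a b ha hb
    show (inl (ofAdd ((a : A p n) + (b : A p n))) : Lamp p n) ∈ U
    erw [ofAdd_add, map_mul]
    exact mul_mem ha hb
  smul_mem' := by
    haveI : NeZero p := ⟨hp⟩
    intro r a ha
    show r • a ∈ {a : (rho p n (rightHom t).toAdd).asModule |
      (inl (ofAdd (a : A p n)) : Lamp p n) ∈ U}
    induction r using MonoidAlgebra.induction_on with
    | of g =>
      rw [MonoidAlgebra.of_apply]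
      have h1 := single_smul p n (rightHom t).toAdd g.toAdd 1 a
      rw [ofAdd_toAdd, one_smul] at h1
      rw [h1]
      have h2 := conj_zpow p n t g.toAdd a
      show (inl (ofAdd (E p n ((rightHom t).toAdd * g.toAdd) (a : A p n))) : Lamp p n) ∈ U
      rw [← h2]
      exact mul_mem (mul_mem (zpow_mem htU _) ha) (inv_mem (zpow_mem htU _))
    | add f g hf hg =>
      rw [add_smul]
      show (inl (ofAdd ((f • a : A p n) + (g • a : A p n))) : Lamp p n) ∈ U
      erw [ofAdd_add, map_mul]
      exact mul_mem hf hg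
    | smul c r hr =>
      rw [smul_smul_assoc]
      set y := r • a with hy
      have hc : ((c.val : ℕ) : ZMod p) = c := by rw [ZMod.natCast_val, ZMod.cast_id]
      have h3 : c • y = c.val • y := by
        nth_rewrite 1 [← hc]
        exact Nat.cast_smul_eq_nsmul _ _ _
      rw [h3]
      show (inl (ofAdd (c.val • (y : A p n))) : Lamp p n) ∈ U
      erw [ofAdd_nsmul, map_pow]
      exact pow_mem hr c.val

lemma mem_toSub (U : Subgroup (Lamp p n)) (t : Lamp p n) (htU : t ∈ U) (hp : p ≠ 0)
    (a : A p n) : toM p n (rightHom t).toAdd a ∈ toSub p n U t htU hp ↔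
      (inl (ofAdd a) : Lamp p n) ∈ U := Iff.rfl

end Stmt17

/-- Suppose `V_m → V` in `Sub(L)` for the lamplighter group `L = (ℤ/pℤ)^n ≀ ℤ`
(pointwise: for every `g ∈ L` the event `g ∈ V_m` eventually equals `g ∈ V`), where
`V` is not contained in the base group `A = ⊕_ℤ(ℤ/pℤ)^n` (its projection to `ℤ` is
nontrivial). Then there is `m₀` with `V ⊆ V_m` for all `m ≥ m₀`. -/
theorem stmt17 (p n : ℕ) (hp : p.Prime) (hn : 1 ≤ n)
    (Vm : ℕ → Subgroup (Lamp p n)) (V : Subgroup (Lamp p n))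
    (hconv : ∀ g : Lamp p n, ∀ᶠ m in Filter.atTop, (g ∈ Vm m ↔ g ∈ V))
    (hV : Subgroup.map SemidirectProduct.rightHom V ≠ ⊥) :
    ∃ m₀ : ℕ, ∀ m ≥ m₀, V ≤ Vm m := by
  classical
  open Stmt17 SemidirectProduct Multiplicative in
  have hcyc : ∃ t, t ∈ V ∧ 0 < (SemidirectProduct.rightHom t).toAdd ∧
      ∀ w ∈ V, ∃ q : ℤ, SemidirectProduct.rightHom w = SemidirectProduct.rightHom t ^ q := by
    obtain ⟨g, hg⟩ := IsCyclic.exists_generator (α := ↥(Subgroup.map SemidirectProduct.rightHom V))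
    have hgen : ∀ h ∈ Subgroup.map SemidirectProduct.rightHom V,
        ∃ q : ℤ, ((g : Multiplicative ℤ)) ^ q = h := by
      intro h hh
      obtain ⟨q, hq⟩ := hg ⟨h, hh⟩
      exact ⟨q, by have h5 := congrArg Subtype.val hq; simpa using h5⟩
    obtain ⟨v, hvV, hv⟩ := Subgroup.mem_map.mp g.2
    have hg0 : (g : Multiplicative ℤ).toAdd ≠ 0 := by
      intro h0
      apply hV
      rw [eq_bot_iff]
      intro h hh
      obtain ⟨q, hq⟩ := hgen h hh
      have hg1 : (g : Multiplicative ℤ) = 1 := by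
        have : Multiplicative.toAdd (g : Multiplicative ℤ) = Multiplicative.toAdd 1 := by
          rw [h0, toAdd_one]
        exact toAdd.injective this
      rw [Subgroup.mem_bot, ← hq, hg1, one_zpow]
    rcases lt_or_gt_of_ne hg0 with hneg | hpos
    · refine ⟨v⁻¹, inv_mem hvV, ?_, ?_⟩
      · rw [map_inv, hv, toAdd_inv]
        omega
      · intro w hw
        obtain ⟨q, hq⟩ := hgen (SemidirectProduct.rightHom w) (Subgroup.mem_map.mpr ⟨w, hw, rfl⟩)
        refine ⟨-q, ?_⟩
        rw [map_inv, hv, inv_zpow, zpow_neg, inv_inv, hq]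
    · refine ⟨v, hvV, by rw [hv]; exact hpos, ?_⟩
      intro w hw
      obtain ⟨q, hq⟩ := hgen (SemidirectProduct.rightHom w) (Subgroup.mem_map.mpr ⟨w, hw, rfl⟩)
      exact ⟨q, by rw [hv, ← hq]⟩
  obtain ⟨t, htV, hkpos, hpow⟩ := hcyc
  have hpne : p ≠ 0 := hp.pos.ne'
  haveI hNoeth := Stmt17.noeth p hp
  haveI hFin := Stmt17.finiteModule p n (SemidirectProduct.rightHom t).toAdd hkpos
  haveI : IsNoetherian (MonoidAlgebra (ZMod p) (Multiplicative ℤ))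
      ((Stmt17.rho p n (SemidirectProduct.rightHom t).toAdd).asModule) :=
    isNoetherian_of_isNoetherianRing_of_finite (MonoidAlgebra (ZMod p) (Multiplicative ℤ))
      ((Stmt17.rho p n (SemidirectProduct.rightHom t).toAdd).asModule)
  obtain ⟨s, hs⟩ := IsNoetherian.noetherian (Stmt17.toSub p n V t htV hpne)
  set S₀ : Finset (Lamp p n) :=
    insert t (s.image (fun a => (SemidirectProduct.inl (Multiplicative.ofAdd (a : Stmt17.A p n))
      : Lamp p n))) with hS₀
  have htS₀ : t ∈ (S₀ : Set (Lamp p n)) := by simp [hS₀]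
  have htc : t ∈ Subgroup.closure (S₀ : Set (Lamp p n)) := Subgroup.subset_closure htS₀
  have hS₀V : ∀ g ∈ S₀, g ∈ V := by
    intro g hg
    rw [hS₀, Finset.mem_insert] at hg
    rcases hg with rfl | hg
    · exact htV
    · obtain ⟨a, haS, rfl⟩ := Finset.mem_image.mp hg
      have haW : a ∈ Stmt17.toSub p n V t htV hpne := by
        rw [← hs]
        exact Submodule.subset_span haS
      exact haW
  have hle : ∀ a : (Stmt17.rho p n (SemidirectProduct.rightHom t).toAdd).asModule,
      a ∈ Stmt17.toSub p n V t htV hpne →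
      a ∈ Stmt17.toSub p n (Subgroup.closure (S₀ : Set (Lamp p n))) t htc hpne := by
    intro a ha
    rw [← hs] at ha
    refine Submodule.span_le.mpr ?_ ha
    intro b hbS
    show (SemidirectProduct.inl (Multiplicative.ofAdd (b : Stmt17.A p n)) : Lamp p n)
      ∈ Subgroup.closure (S₀ : Set (Lamp p n))
    refine Subgroup.subset_closure ?_
    rw [hS₀]
    push_cast [Finset.coe_insert]
    right
    exact Finset.mem_image.mpr ⟨b, hbS, rfl⟩
  have hVle : V ≤ Subgroup.closure (S₀ : Set (Lamp p n)) := by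
    intro v hv
    obtain ⟨q, hq⟩ := hpow v hv
    have h1 : SemidirectProduct.rightHom (v * (t ^ q)⁻¹) = 1 := by
      rw [map_mul, map_inv, map_zpow, hq, mul_inv_cancel]
    have h2 : v * (t ^ q)⁻¹ ∈ MonoidHom.range SemidirectProduct.inl := by
      rw [SemidirectProduct.range_inl_eq_ker_rightHom]
      exact h1
    obtain ⟨b, hb⟩ := h2
    have hbV : (SemidirectProduct.inl b : Lamp p n) ∈ V := by
      rw [hb]
      exact mul_mem hv (inv_mem (zpow_mem htV q))
    have hbW : Multiplicative.toAdd b ∈ Stmt17.toSub p n V t htV hpne := by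
      show (SemidirectProduct.inl (Multiplicative.ofAdd (Multiplicative.toAdd b)) : Lamp p n) ∈ V
      rw [ofAdd_toAdd]
      exact hbV
    have hbC : (SemidirectProduct.inl b : Lamp p n) ∈ Subgroup.closure (S₀ : Set (Lamp p n)) := by
      have h3 := hle _ hbW
      have h4 : (SemidirectProduct.inl (Multiplicative.ofAdd (Multiplicative.toAdd b)) : Lamp p n)
          ∈ Subgroup.closure (S₀ : Set (Lamp p n)) := h3
      rwa [ofAdd_toAdd] at h4
    have hveq : v = (v * (t ^ q)⁻¹) * t ^ q := by group
    rw [hveq, ← hb]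
    exact mul_mem hbC (zpow_mem htc q)
  have hev : ∀ᶠ m in Filter.atTop, ∀ g ∈ S₀, g ∈ Vm m := by
    rw [Filter.eventually_all_finset]
    intro g hg
    exact (hconv g).mono (fun m hm => hm.mpr (hS₀V g hg))
  rw [Filter.eventually_atTop] at hev
  obtain ⟨m₀, hm₀⟩ := hev
  refine ⟨m₀, fun m hm => le_trans hVle ((Subgroup.closure_le _).mpr ?_)⟩
  intro g hg
  exact hm₀ m hm g hg
end
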